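/- Let c₁ := 2√(Md) and κ₁ := 1 + √(d/M)·ln(2d/(1−2θ₁)). Then c₁ > c₀, and if u: [0,∞)×ℝ^d → [0,1] solves u_t = Δu + f(x,u,ω) with f satisfying (H1') and some ω ∈ Ω, then for any t ≥ 0, {x ∈ ℝ^d : u(t,x) ≥ 1−θ₁} ⊆ B_{c₁t+κ₁}({x ∈ ℝ^d : u(0,x) ≥ θ₁}). -/

import Mathlib

open MeasureTheory Set Filter Metric Topology

attribute [local instance] Classical.propDecidable

noncomputable section

namespace Combustion

abbrev Euc (d : ℕ) := EuclideanSpace ℝ (Fin d)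

variable {d : ℕ} {Ω : Type*}

/-- The real inner product on `ℝ^d`. -/
def ip (x y : Euc d) : ℝ := inner ℝ x y

/-! ### Basic differential operators -/

/-- Second derivative of `u` at `x` in direction `v`. -/
def secondDeriv (u : Euc d → ℝ) (x v : Euc d) : ℝ :=
  deriv (deriv fun r : ℝ => u (x + r • v)) 0

/-- The Laplacian of `u` at `x`, as the sum of the second derivatives in the
coordinate directions. -/
def lap (u : Euc d → ℝ) (x : Euc d) : ℝ :=
  ∑ i : Fin d, secondDeriv u x (EuclideanSpace.single i 1)

/-- The time derivative of a space-time function. -/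
def dt (u : ℝ → Euc d → ℝ) (t : ℝ) (x : Euc d) : ℝ :=
  deriv (fun s => u s x) t

/-- `u : [0,∞) × ℝ^d → [0,1]` is a (classical) solution of `u_t = Δu + g(x,u)`. -/
def SolvesRD (g : Euc d → ℝ → ℝ) (u : ℝ → Euc d → ℝ) : Prop :=
  ContinuousOn (fun p : ℝ × Euc d => u p.1 p.2) (Ici (0:ℝ) ×ˢ (univ : Set (Euc d))) ∧
  (∀ t x, u t x ∈ Icc (0:ℝ) 1) ∧
  ∀ t, 0 < t → ∀ x, HasDerivAt (fun s => u s x) (lap (u t) x + g x (u t x)) t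

/-- Solution of the rescaled equation `(u_ε)_t = ε Δ u_ε + ε⁻¹ g(ε⁻¹ x, u_ε)`. -/
def SolvesRDeps (ε : ℝ) (g : Euc d → ℝ → ℝ) (u : ℝ → Euc d → ℝ) : Prop :=
  ContinuousOn (fun p : ℝ × Euc d => u p.1 p.2) (Ici (0:ℝ) ×ˢ (univ : Set (Euc d))) ∧
  (∀ t x, u t x ∈ Icc (0:ℝ) 1) ∧
  ∀ t, 0 < t → ∀ x, HasDerivAt (fun s => u s x)
    (ε * lap (u t) x + ε⁻¹ * g (ε⁻¹ • x) (u t x)) t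

/-- Solution of `u_t = Δu + g(x,u)` with possibly discontinuous initial data, attained
(as `t → 0+`) at the points of the set `cont`. -/
def SolvesRDdisc (g : Euc d → ℝ → ℝ) (u : ℝ → Euc d → ℝ) (cont : Set (Euc d)) : Prop :=
  (∀ t x, u t x ∈ Icc (0:ℝ) 1) ∧
  ContinuousOn (fun p : ℝ × Euc d => u p.1 p.2) (Ioi (0:ℝ) ×ˢ (univ : Set (Euc d))) ∧
  (∀ x ∈ cont, Tendsto (fun t => u t x) (𝓝[>] (0:ℝ)) (𝓝 (u 0 x))) ∧
  ∀ t, 0 < t → ∀ x, HasDerivAt (fun s => u s x) (lap (u t) x + g x (u t x)) t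

/-- Classical supersolution of `u_t = Δu + g(x,u)` on a space-time domain `D`. -/
def IsSupersolOn (g : Euc d → ℝ → ℝ) (u : ℝ → Euc d → ℝ) (D : Set (ℝ × Euc d)) : Prop :=
  ∀ p ∈ D, ∃ v : ℝ, HasDerivAt (fun s => u s p.2) v p.1 ∧
    lap (u p.1) p.2 + g p.2 (u p.1 p.2) ≤ v

/-- Classical subsolution of `u_t = Δu + g(x,u)` on a space-time domain `D`. -/
def IsSubsolOn (g : Euc d → ℝ → ℝ) (u : ℝ → Euc d → ℝ) (D : Set (ℝ × Euc d)) : Prop :=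
  ∀ p ∈ D, ∃ v : ℝ, HasDerivAt (fun s => u s p.2) v p.1 ∧
    v ≤ lap (u p.1) p.2 + g p.2 (u p.1 p.2)

/-! ### Set operations -/

/-- `B_r(A) = A + (B_r(0) ∪ {0})`. -/
def nbhd (r : ℝ) (A : Set (Euc d)) : Set (Euc d) := A ∪ Metric.thickening r A

/-- `A⁰_r = A \ closure (B_r(∂A))`. -/
def interiorShrink (A : Set (Euc d)) (r : ℝ) : Set (Euc d) :=
  A \ closure (nbhd r (frontier A))

/-! ### Hypotheses on reactions -/

/-- Hypothesis (H1') for a single realization `g = f(·,·,ω)` of the reaction. -/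
structure H1fixed (g : Euc d → ℝ → ℝ) (M θ₁ m₁ α₁ : ℝ) : Prop where
  M_ge_one : 1 ≤ M
  θ₁_pos : 0 < θ₁
  θ₁_lt_half : θ₁ < 1 / 2
  m₁_gt_one : 1 < m₁
  α₁_pos : 0 < α₁
  nonneg : ∀ x u, 0 ≤ g x u
  zero_outside : ∀ x u, u ∉ Icc (0:ℝ) 1 → g x u = 0
  lipschitz_x : ∀ u, LipschitzWith (Real.toNNReal M) fun x => g x u
  lipschitz_u : ∀ x, LipschitzWith (Real.toNNReal M) fun u => g x u
  zero_low : ∀ x, ∀ u ∈ Icc (0:ℝ) θ₁, g x u = 0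
  zero_at_one : ∀ x, g x 1 = 0
  lower_near_one : ∀ x, ∀ u ∈ Ico (1 - θ₁) 1, α₁ * (1 - u) ^ m₁ ≤ g x u
  antitone_near_one : ∀ x, AntitoneOn (g x) (Ico (1 - θ₁) 1)

/-- The probability space `(Ω, F, P)` together with a group of measure-preserving
bijections `Υ` under which `f` is stationary. -/
structure StationarySetting [MeasurableSpace Ω] (P : Measure Ω)
    (f : Euc d → ℝ → Ω → ℝ) (Υ : Euc d → Ω → Ω) : Prop where
  isProb : IsProbabilityMeasure P
  meas : ∀ x u, Measurable (f x u)
  bij : ∀ y, Function.Bijective (Υ y)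
  measurePres : ∀ y, MeasurePreserving (Υ y) P P
  add : ∀ y z ω, Υ y (Υ z ω) = Υ (y + z) ω
  stat : ∀ x y u ω, f x u (Υ y ω) = f (x + y) u ω

/-- Hypothesis (H1). -/
def H1 [MeasurableSpace Ω] (P : Measure Ω) (f : Euc d → ℝ → Ω → ℝ)
    (Υ : Euc d → Ω → Ω) (M θ₁ m₁ α₁ : ℝ) : Prop :=
  StationarySetting P f Υ ∧ ∀ ω, H1fixed (fun x u => f x u ω) M θ₁ m₁ α₁

/-- A general stationary reaction (not necessarily ignition). -/
def StationaryReaction [MeasurableSpace Ω] (P : Measure Ω) (g : Euc d → ℝ → Ω → ℝ)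
    (Υ : Euc d → Ω → Ω) : Prop :=
  StationarySetting P g Υ ∧ (∀ x u ω, 0 ≤ g x u ω) ∧
  (∀ x u ω, u ∉ Icc (0:ℝ) 1 → g x u ω = 0) ∧
  ∀ ω, UniformContinuous fun p : Euc d × ℝ => g p.1 p.2 ω

/-- The σ-algebra `E(U)` generated by the values of the reaction on `U × [0,1]`. -/
def reactionSigma [MeasurableSpace Ω] (f : Euc d → ℝ → Ω → ℝ) (U : Set (Euc d)) :
    MeasurableSpace Ω :=
  ⨆ x ∈ U, ⨆ u ∈ Icc (0:ℝ) 1, MeasurableSpace.comap (f x u) inferInstance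

/-- `f` has range of dependence at most `r`. -/
def RangeDepLE [MeasurableSpace Ω] (P : Measure Ω) (f : Euc d → ℝ → Ω → ℝ) (r : ℝ) : Prop :=
  ∀ U V : Set (Euc d), (∀ x ∈ U, ∀ y ∈ V, r ≤ dist x y) →
    ProbabilityTheory.Indep (reactionSigma f U) (reactionSigma f V) P

/-- The ignition temperature `θ_{x,ω}`. -/
def ignitionTemp (f : Euc d → ℝ → Ω → ℝ) (x : Euc d) (ω : Ω) : ℝ :=
  sSup {θ : ℝ | 0 ≤ θ ∧ ∀ u ∈ Icc (0:ℝ) θ, f x u ω = 0}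

/-- `f` is a pure ignition reaction. -/
def PureIgnition (f : Euc d → ℝ → Ω → ℝ) (θ₁ : ℝ) : Prop :=
  ∀ η > (0:ℝ), ∃ ξ > (0:ℝ), ∀ (x : Euc d) (ω : Ω),
    ignitionTemp f x ω + η < 1 - θ₁ → ξ ≤ f x (ignitionTemp f x ω + η) ω

/-! ### The homogeneous reaction `F₀` and its front speed `c₀` -/

/-- The cap `α₁ (1-u)^{m₁} χ_{[1-θ₁,1]}(u)`. -/
def capF (θ₁ m₁ α₁ u : ℝ) : ℝ :=
  if u ∈ Icc (1 - θ₁) 1 then α₁ * (1 - u) ^ m₁ else 0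

/-- `F₀`, the largest `M`-Lipschitz function below `capF` (by inf-convolution). -/
def F0 (M θ₁ m₁ α₁ u : ℝ) : ℝ :=
  sInf {y : ℝ | ∃ v : ℝ, y = capF θ₁ m₁ α₁ v + M * |u - v|}

/-- `c` is a traveling front speed for the homogeneous reaction `F`:
there is a profile `U` with `U'' + cU' + F(U) = 0`, `U(-∞) = 1`, `U(∞) = 0`. -/
def IsTravelingFrontSpeed (F : ℝ → ℝ) (c : ℝ) : Prop :=
  ∃ U : ℝ → ℝ, (∀ s, DifferentiableAt ℝ U s) ∧
    (∀ s, HasDerivAt (deriv U) (-(c * deriv U s) - F (U s)) s) ∧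
    Tendsto U atBot (𝓝 1) ∧ Tendsto U atTop (𝓝 0)

/-- The (unique) traveling front speed `c₀` of `F₀`. -/
def c0 (M θ₁ m₁ α₁ : ℝ) : ℝ :=
  sSup {c : ℝ | IsTravelingFrontSpeed (F0 M θ₁ m₁ α₁) c}

/-- `c₁ := 2√(Md)`. -/
def c1 (d : ℕ) (M : ℝ) : ℝ := 2 * Real.sqrt (M * d)

/-! ### The spreading lemma constants `θ₂`, `θ*`, `κ₀` -/

/-- `θ₂` is a spreading-lemma constant: once a solution exceeds `θ₂` somewhere,
it spreads with any speed `c < c₀` towards any level `θ < 1`, after a delay `κ`. -/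
def SpreadingProp (d : ℕ) (M θ₁ m₁ α₁ θ₂ : ℝ) : Prop :=
  θ₂ < 1 ∧
  ∀ c : ℝ, c < c0 M θ₁ m₁ α₁ → ∀ θ : ℝ, θ < 1 → ∃ κ : ℝ, 1 ≤ κ ∧
    ∀ g : Euc d → ℝ → ℝ, H1fixed g M θ₁ m₁ α₁ →
    ∀ u : ℝ → Euc d → ℝ, SolvesRD g u →
    ∀ t₀ : ℝ, 1 ≤ t₀ → ∀ y : Euc d, θ₂ ≤ u t₀ y →
    ∀ t : ℝ, t₀ + κ ≤ t → ∀ x : Euc d, dist x y ≤ c * (t - t₀) → θ ≤ u t x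

/-- `θ* := (1/4) min {1-θ₂, θ₁}`. -/
def thetaStar (θ₂ θ₁ : ℝ) : ℝ := min (1 - θ₂) θ₁ / 4

/-- The constant `κ₀ = κ₀(M,θ₁,m₁,α₁,c₀/2,1-θ*)` from the spreading lemma. -/
def Kappa0Prop (d : ℕ) (M θ₁ m₁ α₁ θ₂ κ₀ : ℝ) : Prop :=
  SpreadingProp d M θ₁ m₁ α₁ θ₂ ∧ 1 ≤ κ₀ ∧
  ∀ g : Euc d → ℝ → ℝ, H1fixed g M θ₁ m₁ α₁ →
  ∀ u : ℝ → Euc d → ℝ, SolvesRD g u →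
  ∀ t₀ : ℝ, 1 ≤ t₀ → ∀ y : Euc d, θ₂ ≤ u t₀ y →
  ∀ t : ℝ, t₀ + κ₀ ≤ t → ∀ x : Euc d,
    dist x y ≤ c0 M θ₁ m₁ α₁ / 2 * (t - t₀) → 1 - thetaStar θ₂ θ₁ ≤ u t x

/-! ### Transition widths, special initial data, arrival times -/

/-- `F(u) := inf_{(x,ω)} f(x,u,ω)`. -/
def Finf (f : Euc d → ℝ → Ω → ℝ) (v : ℝ) : ℝ := ⨅ (x : Euc d) (ω : Ω), f x v ω

/-- The width `L_{u,η,θ}(t)` of the transition zone from `η` to `θ`. -/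
def transWidth (u : ℝ → Euc d → ℝ) (η θ t : ℝ) : ℝ :=
  sInf {L : ℝ | 0 < L ∧ {x : Euc d | η ≤ u t x} ⊆ nbhd L {x : Euc d | θ ≤ u t x}}

/-- A smooth initial datum `u₀` for the set `S`, satisfying
`(1-θ*)χ_S ≤ u₀ ≤ (1-θ*)χ_{B_{R₀}(S)}` and `Δu₀ + F(u₀) ≥ 0`. -/
def IsFrontInit (f : Euc d → ℝ → Ω → ℝ) (θs R₀ : ℝ) (S : Set (Euc d))
    (u₀ : Euc d → ℝ) : Prop :=
  ContDiff ℝ (⊤ : ℕ∞) u₀ ∧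
  (∀ x : Euc d, (if x ∈ S then 1 - θs else 0) ≤ u₀ x) ∧
  (∀ x : Euc d, u₀ x ≤ if x ∈ nbhd R₀ S then 1 - θs else 0) ∧
  (∀ x : Euc d, 0 ≤ lap u₀ x + Finf f (u₀ x))

/-- Special initial datum for the ball `B_k(0)`. -/
def IsBallInit (f : Euc d → ℝ → Ω → ℝ) (θs R₀ k : ℝ) (u₀ : Euc d → ℝ) : Prop :=
  IsFrontInit f θs R₀ (ball (0 : Euc d) k) u₀

/-- The `a`-shifted version of the ball initial data:
`(1-a)(1-θ*)χ_{B_k(0)} + a ≤ u₀ ≤ (1-a)(1-θ*)χ_{B_{k+R₀}(0)} + a` and `Δu₀ + F(u₀) ≥ 0`. -/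
def IsBallInitA (f : Euc d → ℝ → Ω → ℝ) (θs R₀ a k : ℝ) (u₀ : Euc d → ℝ) : Prop :=
  ContDiff ℝ (⊤ : ℕ∞) u₀ ∧
  (∀ x : Euc d,
      (if x ∈ ball (0 : Euc d) k then (1 - a) * (1 - θs) + a else a) ≤ u₀ x) ∧
  (∀ x : Euc d,
      u₀ x ≤ if x ∈ ball (0 : Euc d) (k + R₀) then (1 - a) * (1 - θs) + a else a) ∧
  (∀ x : Euc d, 0 ≤ lap u₀ x + Finf f (u₀ x))

/-- `w` is one of the chosen initial data `u_{0,k}` or a locally uniform limit of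
their translations. -/
def IsLimitInit (u0 : ℕ → Euc d → ℝ) (w : Euc d → ℝ) : Prop :=
  (∃ k : ℕ, w = u0 k) ∨
  ∃ (k : ℕ → ℕ) (y : ℕ → Euc d),
    TendstoLocallyUniformly (fun j (x : Euc d) => u0 (k j) (x + y j)) w atTop

/-- The arrival time `T_u(x) := inf {t ≥ 0 | u(t,x) ≥ 1-θ*}`. -/
def arrivalTime (θs : ℝ) (u : ℝ → Euc d → ℝ) (x : Euc d) : ℝ :=
  sInf {t : ℝ | 0 ≤ t ∧ 1 - θs ≤ u t x}

/-! ### The quantitative hypotheses (H2'), (H2''), (H3), (H4'), (H4'') -/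

/-- The uniform bounds (2.1): transition widths stay `≤ μ*⁻¹(1+t^{α₂})η^{-m₂}` and
`u_t ≥ μ*` at intermediate values after time `κ*`, for all special solutions. -/
def UnifBounds (f : Euc d → ℝ → Ω → ℝ) (u0 : ℕ → Euc d → ℝ)
    (θs α₂ m₂ μs κs : ℝ) : Prop :=
  ∀ (ω : Ω) (k : ℕ) (u : ℝ → Euc d → ℝ),
    SolvesRD (fun x v => f x v ω) u → u 0 = u0 k →
    (∀ t : ℝ, 0 ≤ t → ∀ η : ℝ, 0 < η →
      transWidth u η (1 - θs) t ≤ μs⁻¹ * (1 + t ^ α₂) * η ^ (-m₂)) ∧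
    (∀ t : ℝ, κs ≤ t → ∀ x : Euc d, u t x ∈ Icc θs (1 - θs) → μs ≤ dt u t x)

/-- Hypothesis (H2'), with all relevant constants named. -/
def H2'with [MeasurableSpace Ω] (P : Measure Ω) (f : Euc d → ℝ → Ω → ℝ)
    (Υ : Euc d → Ω → Ω) (M θ₁ m₁ α₁ θ₂ R₀ α₂ m₂ μs κs : ℝ)
    (u0 : ℕ → Euc d → ℝ) : Prop :=
  H1 P f Υ M θ₁ m₁ α₁ ∧ SpreadingProp d M θ₁ m₁ α₁ θ₂ ∧ 1 ≤ R₀ ∧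
  α₂ < 1 ∧ 0 < m₂ ∧ 0 < μs ∧ 0 < κs ∧
  (∀ k : ℕ, IsBallInit f (thetaStar θ₂ θ₁) R₀ (k : ℝ) (u0 k)) ∧
  UnifBounds f u0 (thetaStar θ₂ θ₁) α₂ m₂ μs κs

/-- The uniform bounds (7.0) corresponding to (H2''). -/
def UnifBoundsA (f : Euc d → ℝ → Ω → ℝ) (u0 : ℝ → ℕ → Euc d → ℝ)
    (θs α₂ m₂ a₂ α₂' μs κs : ℝ) : Prop :=
  ∀ a ∈ Icc (0:ℝ) a₂, ∀ (ω : Ω) (k : ℕ) (u : ℝ → Euc d → ℝ),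
    SolvesRD (fun x v => f x v ω) u → u 0 = u0 a k →
    (∀ t : ℝ, 0 ≤ t → ∀ η : ℝ, 0 < η →
      transWidth u (η + a) (1 - θs) t ≤ μs⁻¹ * (1 + t ^ α₂) * η ^ (-m₂)) ∧
    (∀ t : ℝ, κs ≤ t → ∀ x : Euc d, u t x ∈ Icc θs (1 - θs) →
      μs ≤ dt u t x * t ^ α₂')

/-- Hypothesis (H2''), with all relevant constants named. -/
def H2''with [MeasurableSpace Ω] (P : Measure Ω) (f : Euc d → ℝ → Ω → ℝ)
    (Υ : Euc d → Ω → Ω) (M θ₁ m₁ α₁ θ₂ R₀ α₂ m₂ a₂ α₂' μs κs : ℝ)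
    (u0 : ℝ → ℕ → Euc d → ℝ) : Prop :=
  H1 P f Υ M θ₁ m₁ α₁ ∧ SpreadingProp d M θ₁ m₁ α₁ θ₂ ∧ 1 ≤ R₀ ∧
  α₂ < 1 ∧ 0 < m₂ ∧ a₂ ∈ Icc (0:ℝ) (thetaStar θ₂ θ₁ / 2) ∧
  α₂' < min (1 / (m₁ - 1)) ((1 - α₂) / m₂) ∧ 0 < μs ∧ 0 < κs ∧
  (∀ a ∈ Icc (0:ℝ) a₂, ∀ k : ℕ,
    IsBallInitA f (thetaStar θ₂ θ₁) R₀ a (k : ℝ) (u0 a k)) ∧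
  UnifBoundsA f u0 (thetaStar θ₂ θ₁) α₂ m₂ a₂ α₂' μs κs

/-- Hypothesis (H3). -/
def H3 (f : Euc d → ℝ → Ω → ℝ) (θ₁ m₃ α₃ : ℝ) : Prop :=
  1 ≤ m₃ ∧ 0 < α₃ ∧
  ∀ η ∈ Ioc (0:ℝ) (θ₁ / 2), ∀ (x : Euc d) (ω : Ω), ∀ u ∈ Icc (1 - θ₁ / 2) 1,
    α₃ * η ^ m₃ ≤ f x (u - η) ω - f x u ω

/-- The event that `f_n` is far from `f` somewhere in `B_{n^{1+m₄'}}(0) × [0,1]`. -/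
def badEvent (f g : Euc d → ℝ → Ω → ℝ) (m₄ m₄' α₄ n : ℝ) : Set Ω :=
  {ω : Ω | ∃ (x : Euc d) (u : ℝ), ‖x‖ < n ^ (1 + m₄') ∧ u ∈ Icc (0:ℝ) 1 ∧
    α₄ * n ^ (-m₄) < |g x u ω - f x u ω|}

/-- Hypothesis (H4'), for a given family `fn` of approximating reactions with
initial data families `u0n`. -/
def H4'with [MeasurableSpace Ω] (P : Measure Ω) (f : Euc d → ℝ → Ω → ℝ)
    (Υ : Euc d → Ω → Ω) (M θ₁ m₁ α₁ θ₂ R₀ α₂ m₂ μs κs m₄ m₄' n₄ α₄ : ℝ)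
    (fn : ℝ → Euc d → ℝ → Ω → ℝ) (u0n : ℝ → ℕ → Euc d → ℝ) : Prop :=
  0 < m₄ ∧ 0 < m₄' ∧ 0 < n₄ ∧ 0 < α₄ ∧
  SpreadingProp d M θ₁ m₁ α₁ θ₂ ∧ 1 ≤ R₀ ∧ α₂ < 1 ∧ 0 < m₂ ∧ 0 < μs ∧ 0 < κs ∧
  ∀ n : ℝ, n₄ ≤ n →
    StationaryReaction P (fn n) Υ ∧
    RangeDepLE P (fn n) n ∧
    P (badEvent f (fn n) m₄ m₄' α₄ n) ≤
      ENNReal.ofReal (n ^ (-(2 * (d:ℝ) + 1 + m₄'))) ∧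
    (∀ ω, H1fixed (fun x u => fn n x u ω) M θ₁ m₁ α₁) ∧
    (∀ k : ℕ, IsBallInit (fn n) (thetaStar θ₂ θ₁) R₀ (k : ℝ) (u0n n k)) ∧
    UnifBounds (fn n) (u0n n) (thetaStar θ₂ θ₁) α₂ m₂ μs κs

/-- Hypothesis (H4''). -/
def H4''with [MeasurableSpace Ω] (P : Measure Ω) (f : Euc d → ℝ → Ω → ℝ)
    (Υ : Euc d → Ω → Ω)
    (M θ₁ m₁ α₁ θ₂ R₀ α₂ m₂ a₂ α₂' μs κs m₃ m₄ m₄' n₄ α₄ : ℝ)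
    (fn : ℝ → Euc d → ℝ → Ω → ℝ) (u0n : ℝ → ℝ → ℕ → Euc d → ℝ) : Prop :=
  0 < m₄ ∧ 0 < m₄' ∧ 0 < n₄ ∧ 0 < α₄ ∧
  SpreadingProp d M θ₁ m₁ α₁ θ₂ ∧ 1 ≤ R₀ ∧ α₂ < 1 ∧ 0 < m₂ ∧
  a₂ ∈ Icc (0:ℝ) (thetaStar θ₂ θ₁ / 2) ∧
  α₂' < min (1 / (m₁ - 1)) ((1 - α₂) / m₂) ∧ α₂' < m₄ / m₃ ∧ 0 < μs ∧ 0 < κs ∧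
  ∀ n : ℝ, n₄ ≤ n →
    StationaryReaction P (fn n) Υ ∧
    RangeDepLE P (fn n) n ∧
    P (badEvent f (fn n) m₄ m₄' α₄ n) ≤
      ENNReal.ofReal (n ^ (-(2 * (d:ℝ) + 1 + m₄'))) ∧
    (∀ ω, H1fixed (fun x u => fn n x u ω) M θ₁ m₁ α₁) ∧
    (∀ a ∈ Icc (0:ℝ) a₂, ∀ k : ℕ,
      IsBallInitA (fn n) (thetaStar θ₂ θ₁) R₀ a (k : ℝ) (u0n n a k)) ∧
    UnifBoundsA (fn n) (u0n n) (thetaStar θ₂ θ₁) α₂ m₂ a₂ α₂' μs κs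

/-- The function `ν(a)` of Proposition 3.1. -/
def nuFn [MeasurableSpace Ω] (P : Measure Ω) (f : Euc d → ℝ → Ω → ℝ)
    (fn : ℝ → Euc d → ℝ → Ω → ℝ) (m₄ m₄' n₄ α₄ a : ℝ) : ENNReal :=
  ⨆ (n : ℝ) (_ : max ((⌈a⌉₊ : ℝ)) n₄ ≤ n), P (badEvent f (fn n) m₄ m₄' α₄ n)

/-- The exponents `β₁` and `β₃`. -/
def beta1 (m₁ m₂ α₂ : ℝ) : ℝ := max ((m₁ - 1) / m₁) ((m₂ + α₂) / (m₂ + 1))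

def beta3 (d : ℕ) (m₁ m₂ α₂ m₃ m₄ m₄' : ℝ) : ℝ :=
  max (beta1 m₁ m₂ α₂)
    (max (m₃ / (m₃ + 2 * m₄)) ((2 * (d:ℝ) + 2) / (2 * (d:ℝ) + 2 + m₄')))

/-- The class `F(F₀,M,θ₁,ζ,ξ)` of Definition 1.2. -/
def IgnitionClass (f : Euc d → ℝ → Ω → ℝ) (M θ₁ m₁ α₁ ζ ξ : ℝ) : Prop :=
  (∀ ω, H1fixed (fun x u => f x u ω) M θ₁ m₁ α₁) ∧
  ∀ (x : Euc d) (ω : Ω) (u : ℝ), u ≤ 1 - θ₁ →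
    (∀ ε : ℝ, 0 < ε → ∃ v : ℝ, 0 ≤ v ∧ v < u + ε ∧ ζ * v < f x v ω) →
    ξ ≤ f x u ω

/-! ### Viscosity solutions of `v_t = c*(-∇v/|∇v|)|∇v|` -/

/-- The Hamiltonian `H(p) = c*(-p/|p|) |p|`. -/
def hamHJ (cs : Euc d → ℝ) (p : Euc d) : ℝ := ‖p‖ * cs (-(‖p‖⁻¹ • p))

/-- The spatial gradient of a test function on `ℝ × ℝ^d`. -/
def spaceGrad (φ : ℝ × Euc d → ℝ) (q : ℝ × Euc d) : Euc d :=
  (EuclideanSpace.equiv (Fin d) ℝ).symm fun i =>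
    fderiv ℝ φ q ((0 : ℝ), EuclideanSpace.single i 1)

/-- The time derivative of a test function on `ℝ × ℝ^d`. -/
def timeDeriv (φ : ℝ × Euc d → ℝ) (q : ℝ × Euc d) : ℝ :=
  fderiv ℝ φ q ((1 : ℝ), (0 : Euc d))

/-- Continuous viscosity solution of `v_t = c*(-∇v/|∇v|)|∇v|` on `(0,∞) × ℝ^d`. -/
def IsViscositySol (cs : Euc d → ℝ) (v : ℝ × Euc d → ℝ) : Prop :=
  Continuous v ∧
  (∀ φ : ℝ × Euc d → ℝ, ContDiff ℝ (⊤ : ℕ∞) φ → ∀ q : ℝ × Euc d, 0 < q.1 →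
    IsLocalMax (fun p => v p - φ p) q → timeDeriv φ q ≤ hamHJ cs (spaceGrad φ q)) ∧
  (∀ φ : ℝ × Euc d → ℝ, ContDiff ℝ (⊤ : ℕ∞) φ → ∀ q : ℝ × Euc d, 0 < q.1 →
    IsLocalMin (fun p => v p - φ p) q → hamHJ cs (spaceGrad φ q) ≤ timeDeriv φ q)

/-! ### Homogenization conclusions -/

/-- The conclusion of the homogenization theorems (Theorem 1.1 of the paper). -/
def HomogConclusion [MeasurableSpace Ω] (P : Measure Ω)
    (f : Euc d → ℝ → Ω → ℝ) (θ₁ : ℝ) : Prop :=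
  ∃ cs : Euc d → ℝ,
    (∃ KL : NNReal, LipschitzOnWith KL cs (sphere (0 : Euc d) 1)) ∧
    (∀ e ∈ sphere (0 : Euc d) 1, 0 < cs e) ∧
    ∀ A : Set (Euc d), IsOpen A →
    ∀ v : ℝ × Euc d → ℝ, IsViscositySol cs v →
      (∃ L : NNReal, LipschitzWith L fun x : Euc d => v (0, x)) →
      (∀ x ∈ A, 0 < v (0, x)) → (∀ x ∉ closure A, v (0, x) < 0) →
    ∀ Λ : ℝ, 0 < Λ →
    ∀ (uE : ℝ → Ω → ℝ → Euc d → ℝ) (yE : ℝ → Euc d) (ψ : ℝ → ℝ),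
      Tendsto ψ (𝓝[>] (0:ℝ)) (𝓝 0) →
      (∀ ε : ℝ, 0 < ε → yE ε ∈ ball (0 : Euc d) Λ) →
      (∀ ε : ℝ, 0 < ε → ∀ ω, SolvesRDeps ε (fun x u => f x u ω) (uE ε ω)) →
      (∀ ε : ℝ, 0 < ε → ∀ ω, ∀ x : Euc d,
        (if x ∈ interiorShrink A (ψ ε) then 1 - θ₁ else 0) ≤ uE ε ω 0 (x + yE ε) ∧
        uE ε ω 0 (x + yE ε) ≤ (if x ∈ nbhd (ψ ε) A then 1 else ψ ε)) →
      ∀ᵐ ω ∂P, ∀ K : Set (ℝ × Euc d), IsCompact K →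
        K ⊆ (Ici (0:ℝ) ×ˢ (univ : Set (Euc d))) \
              frontier {p : ℝ × Euc d | 0 < p.1 ∧ 0 < v p} →
        ∀ δ : ℝ, 0 < δ → ∀ᶠ ε in 𝓝[>] (0:ℝ), ∀ p ∈ K,
          |uE ε ω p.1 (p.2 + yE ε) -
            ({p : ℝ × Euc d | 0 < p.1 ∧ 0 < v p}).indicator (fun _ => (1:ℝ)) p| < δ

/-- The conclusion of Theorem 1.7(ii): homogenization for convex open sets `A`,
with the modified initial condition. -/
def HomogConclusionConvex [MeasurableSpace Ω] (P : Measure Ω)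
    (f : Euc d → ℝ → Ω → ℝ) (θ₁ : ℝ) : Prop :=
  ∃ cs : Euc d → ℝ,
    (∃ KL : NNReal, LipschitzOnWith KL cs (sphere (0 : Euc d) 1)) ∧
    (∀ e ∈ sphere (0 : Euc d) 1, 0 < cs e) ∧
    ∀ A : Set (Euc d), IsOpen A → Convex ℝ A →
    ∀ v : ℝ × Euc d → ℝ, IsViscositySol cs v →
      (∃ L : NNReal, LipschitzWith L fun x : Euc d => v (0, x)) →
      (∀ x ∈ A, 0 < v (0, x)) → (∀ x ∉ closure A, v (0, x) < 0) →
    ∀ Λ : ℝ, 0 < Λ →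
    ∀ (uE : ℝ → Ω → ℝ → Euc d → ℝ) (yE : ℝ → Euc d) (ψ : ℝ → ℝ),
      Tendsto ψ (𝓝[>] (0:ℝ)) (𝓝 0) →
      (∀ ε : ℝ, 0 < ε → yE ε ∈ ball (0 : Euc d) Λ) →
      (∀ ε : ℝ, 0 < ε → ∀ ω, SolvesRDeps ε (fun x u => f x u ω) (uE ε ω)) →
      (∀ ε : ℝ, 0 < ε → ∀ ω, ∀ x : Euc d,
        (if x ∈ interiorShrink A (ψ ε) then 1 - θ₁ else 0) ≤ uE ε ω 0 (x + yE ε) ∧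
        uE ε ω 0 (x + yE ε) ≤ (if x ∈ nbhd (ψ ε) A then 1 - Λ⁻¹ else 0)) →
      ∀ᵐ ω ∂P, ∀ K : Set (ℝ × Euc d), IsCompact K →
        K ⊆ (Ici (0:ℝ) ×ˢ (univ : Set (Euc d))) \
              frontier {p : ℝ × Euc d | 0 < p.1 ∧ 0 < v p} →
        ∀ δ : ℝ, 0 < δ → ∀ᶠ ε in 𝓝[>] (0:ℝ), ∀ p ∈ K,
          |uE ε ω p.1 (p.2 + yE ε) -
            ({p : ℝ × Euc d | 0 < p.1 ∧ 0 < v p}).indicator (fun _ => (1:ℝ)) p| < δ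

/-! ### Deterministic (strong, exclusive) front speeds -/

/-- The half-spaces `H_e^-` and `H_e^+`. -/
def halfMinus (e : Euc d) : Set (Euc d) := {x : Euc d | ip x e ≤ 0}

def halfPlus (e : Euc d) : Set (Euc d) := {x : Euc d | 0 < ip x e}

/-- The front-speed limits in direction `e` with speed `c`, for a single `ω` and
compact `K ⊆ H_e^+`, uniformly over shifts `|y| ≤ Λt`. -/
def FrontLimits (f : Euc d → ℝ → Ω → ℝ) (Υ : Euc d → Ω → Ω) (θs R₀ : ℝ)
    (e : Euc d) (c : ℝ) (ω : Ω) (K : Set (Euc d)) : Prop :=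
  ∀ u₀ : Euc d → ℝ, IsFrontInit f θs R₀ (halfMinus e) u₀ →
  ∀ U : Ω → ℝ → Euc d → ℝ,
    (∀ ω', SolvesRD (fun x v => f x v ω') (U ω') ∧ U ω' 0 = u₀) →
  ∀ Λ : ℝ, 0 ≤ Λ →
    (∀ δ : ℝ, 0 < δ → ∃ T : ℝ, ∀ t : ℝ, T ≤ t → ∀ y : Euc d, ‖y‖ ≤ Λ * t →
      ∀ k ∈ K, 1 - δ ≤ U (Υ y ω) t (t • (c • e - k))) ∧
    (∀ δ : ℝ, 0 < δ → ∃ T : ℝ, ∀ t : ℝ, T ≤ t → ∀ y : Euc d, ‖y‖ ≤ Λ * t →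
      ∀ k ∈ K, U (Υ y ω) t (t • (c • e + k)) ≤ δ)

/-- `c` is a deterministic strong front speed in direction `e`. -/
def DetStrongFrontSpeed [MeasurableSpace Ω] (P : Measure Ω)
    (f : Euc d → ℝ → Ω → ℝ) (Υ : Euc d → Ω → Ω) (θs R₀ : ℝ)
    (e : Euc d) (c : ℝ) : Prop :=
  ∃ Ωe : Set Ω, MeasurableSet Ωe ∧ P Ωe = 1 ∧
    ∀ ω ∈ Ωe, ∀ K : Set (Euc d), IsCompact K → K ⊆ halfPlus e →
      FrontLimits f Υ θs R₀ e c ω K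

/-- The exclusivity condition on solutions `w_{e,a}` with initial data
`χ_{H_e^-} + a χ_{H_e^+}`. -/
def ExclusiveCond (f : Euc d → ℝ → Ω → ℝ) (Υ : Euc d → Ω → Ω)
    (e : Euc d) (c : ℝ) (ω : Ω) (K : Set (Euc d)) (lam : ℝ → ℝ) : Prop :=
  ∀ Λ : ℝ, 0 < Λ → ∀ a ∈ Ioc (0:ℝ) 1, ∀ W : Ω → ℝ → Euc d → ℝ,
    (∀ ω', SolvesRDdisc (fun x v => f x v ω') (W ω') {x : Euc d | ip x e ≠ 0} ∧
      W ω' 0 = fun x : Euc d => if ip x e ≤ 0 then 1 else a) →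
    ∀ δ : ℝ, 0 < δ → ∃ T : ℝ, ∀ t : ℝ, T ≤ t → ∀ y : Euc d, ‖y‖ ≤ Λ * t →
      ∀ k ∈ K, W (Υ y ω) t (t • (c • e + k)) ≤ lam a + δ

/-- `c` is a deterministic strong exclusive front speed in direction `e`. -/
def DetStrongExclusiveFrontSpeed [MeasurableSpace Ω] (P : Measure Ω)
    (f : Euc d → ℝ → Ω → ℝ) (Υ : Euc d → Ω → Ω) (θs R₀ : ℝ)
    (e : Euc d) (c : ℝ) : Prop :=
  ∃ Ωe : Set Ω, MeasurableSet Ωe ∧ P Ωe = 1 ∧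
    ∀ ω ∈ Ωe, ∀ K : Set (Euc d), IsCompact K → K ⊆ halfPlus e →
      FrontLimits f Υ θs R₀ e c ω K ∧
      ∃ lam : ℝ → ℝ, (∀ a ∈ Ioc (0:ℝ) 1, lam a ∈ Ioc (0:ℝ) 1) ∧
        Tendsto lam (𝓝[>] (0:ℝ)) (𝓝 0) ∧ ExclusiveCond f Υ e c ω K lam

/-- Strong exclusive front speed with the extra information `λ(a) = a` for all
small enough `a > 0`. -/
def DetStrongExclusiveFrontSpeedEq [MeasurableSpace Ω] (P : Measure Ω)
    (f : Euc d → ℝ → Ω → ℝ) (Υ : Euc d → Ω → Ω) (θs R₀ : ℝ)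
    (e : Euc d) (c : ℝ) : Prop :=
  ∃ Ωe : Set Ω, MeasurableSet Ωe ∧ P Ωe = 1 ∧
    ∀ ω ∈ Ωe, ∀ K : Set (Euc d), IsCompact K → K ⊆ halfPlus e →
      FrontLimits f Υ θs R₀ e c ω K ∧
      ∃ lam : ℝ → ℝ, (∀ a ∈ Ioc (0:ℝ) 1, lam a ∈ Ioc (0:ℝ) 1) ∧
        Tendsto lam (𝓝[>] (0:ℝ)) (𝓝 0) ∧
        (∃ a₀ : ℝ, 0 < a₀ ∧ ∀ a ∈ Ioc (0:ℝ) a₀, lam a = a) ∧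
        ExclusiveCond f Υ e c ω K lam


/-! ### Auxiliary lemmas for Statement 7 -/

set_option maxHeartbeats 2000000

/-- If `h` is continuous and `h - (C + A e^{λr} + B e^{-λr})` has a global max at `0`,
then the (possibly junk) iterated derivative `deriv (deriv h) 0` is at most `λ²(A+B)`. -/
lemma secondDeriv_le_of_max (h : ℝ → ℝ) (hc : Continuous h) (C A B lam : ℝ)
    (hA : 0 < A) (hB : 0 < B) (hlam : 0 < lam)
    (hmax : ∀ r : ℝ, h r - (C + A * Real.exp (lam * r) + B * Real.exp (-(lam * r)))
      ≤ h 0 - (C + A + B)) :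
    deriv (deriv h) 0 ≤ lam ^ 2 * (A + B) := by
  classical
  set q : ℝ → ℝ := fun r => C + A * Real.exp (lam * r) + B * Real.exp (-(lam * r)) with hqdef
  have hq0 : q 0 = C + A + B := by simp [q]
  set q1 : ℝ → ℝ := fun r => lam * A * Real.exp (lam * r) - lam * B * Real.exp (-(lam * r))
    with hq1def
  have hexp : ∀ r : ℝ, HasDerivAt (fun r : ℝ => Real.exp (lam * r))
      (Real.exp (lam * r) * lam) r := by
    intro r
    have := ((hasDerivAt_id r).const_mul lam).exp
    simpa using this
  have hexp' : ∀ r : ℝ, HasDerivAt (fun r : ℝ => Real.exp (-(lam * r)))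
      (Real.exp (-(lam * r)) * (-lam)) r := by
    intro r
    have : HasDerivAt (fun r : ℝ => -(lam * r)) (-lam) r := by
      have := ((hasDerivAt_id r).const_mul lam).neg
      exact this.congr_deriv (by ring)
    exact this.exp
  have hqd : ∀ r, HasDerivAt q (q1 r) r := by
    intro r
    have h1 := ((hexp r).const_mul A).const_add C
    have h2 := (hexp' r).const_mul B
    have := h1.add h2
    refine this.congr_deriv ?_
    simp [q1]; ring
  have hq1d : ∀ r, HasDerivAt q1 (lam ^ 2 * A * Real.exp (lam * r)
      + lam ^ 2 * B * Real.exp (-(lam * r))) r := by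
    intro r
    have h1 := (hexp r).const_mul (lam * A)
    have h2 := (hexp' r).const_mul (lam * B)
    have := h1.sub h2
    refine this.congr_deriv ?_
    ring
  set D : ℝ → ℝ := deriv h with hD
  by_cases hDd : DifferentiableAt ℝ D 0
  swap
  · rw [show deriv (deriv h) 0 = deriv D 0 from rfl,
      deriv_zero_of_not_differentiableAt hDd]
    positivity
  have hmax' : ∀ r : ℝ, h r - q r ≤ h 0 - q 0 := by
    intro r; rw [hq0]; exact hmax r
  by_cases hev : ∀ᶠ r in 𝓝[≠] (0:ℝ), DifferentiableAt ℝ h r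
  · -- honest case
    set G : ℝ → ℝ := fun r => D r - q1 r with hG
    have hGd : HasDerivAt G (deriv D 0 - (lam ^ 2 * A + lam ^ 2 * B)) 0 := by
      have h2 := hq1d 0
      have h2' : HasDerivAt q1 (lam ^ 2 * A + lam ^ 2 * B) 0 := by
        convert h2 using 1; simp
      exact hDd.hasDerivAt.sub h2'
    -- suppose the conclusion fails
    by_contra hcon
    push_neg at hcon
    have hβ : 0 < deriv D 0 - (lam ^ 2 * A + lam ^ 2 * B) := by nlinarith
    -- the punctured neighborhood of honest differentiability
    obtain ⟨δ, hδpos, hδ⟩ : ∃ δ > 0, ∀ r : ℝ, r ≠ 0 → |r| < δ → DifferentiableAt ℝ h r := by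
      rcases Metric.mem_nhdsWithin_iff.mp hev with ⟨δ, hδpos, hδ⟩
      refine ⟨δ, hδpos, fun r hr0 hrδ => hδ ⟨?_, hr0⟩⟩
      simpa [Real.dist_eq] using hrδ
    set g : ℝ → ℝ := fun r => h r - q r with hg
    have hqc : Continuous q := by
      rw [hqdef]; fun_prop
    have hgc : Continuous g := hc.sub hqc
    have hgd : ∀ r : ℝ, r ≠ 0 → |r| < δ → HasDerivAt g (G r) r := by
      intro r h1 h2
      exact ((hδ r h1 h2).hasDerivAt).sub (hqd r)
    -- trichotomy on G 0
    have hKmono : ∀ δ' : ℝ, 0 < δ' → δ' ≤ δ → (∀ r : ℝ, 0 < r → r < δ' → 0 < G r) → False := by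
      intro δ' hδ'pos hδ'le hpos
      have hmono : StrictMonoOn g (Icc 0 (δ' / 2)) := by
        apply strictMonoOn_of_deriv_pos (convex_Icc _ _) (hgc.continuousOn)
        intro x hx
        rw [interior_Icc] at hx
        have hd' := hgd x (ne_of_gt hx.1) (by rw [abs_of_pos hx.1]; linarith [hx.2])
        rw [hd'.deriv]
        exact hpos x hx.1 (by linarith [hx.2])
      have h1 := hmono (Set.left_mem_Icc.mpr (by linarith)) (Set.right_mem_Icc.mpr (by linarith))
        (by linarith)
      have h2 : g (δ' / 2) ≤ g 0 := hmax' _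
      linarith
    have hKmono' : ∀ δ' : ℝ, 0 < δ' → δ' ≤ δ → (∀ r : ℝ, -δ' < r → r < 0 → G r < 0) → False := by
      intro δ' hδ'pos hδ'le hneg
      have hmono : StrictAntiOn g (Icc (-(δ' / 2)) 0) := by
        apply strictAntiOn_of_deriv_neg (convex_Icc _ _) (hgc.continuousOn)
        intro x hx
        rw [interior_Icc] at hx
        have hd' := hgd x (ne_of_lt hx.2) (by rw [abs_of_neg hx.2]; linarith [hx.1])
        rw [hd'.deriv]
        exact hneg x (by linarith [hx.1]) hx.2
      have h1 := hmono (Set.left_mem_Icc.mpr (by linarith)) (Set.right_mem_Icc.mpr (by linarith))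
        (by linarith)
      have h2 : g (-(δ' / 2)) ≤ g 0 := hmax' _
      linarith
    have hGc : ContinuousAt G 0 := hGd.differentiableAt.continuousAt
    rcases lt_trichotomy (G 0) 0 with hb | hb | hb
    · -- G 0 < 0 : decreasing to the left
      have : ∀ᶠ r in 𝓝 (0:ℝ), G r < 0 := hGc.eventually_lt_const hb
      rcases Metric.eventually_nhds_iff.mp this with ⟨δ'', hδ''pos, hδ''⟩
      refine hKmono' (min δ δ'') (lt_min hδpos hδ''pos) (min_le_left _ _) ?_
      intro r h1 h2
      apply hδ''
      rw [Real.dist_eq, sub_zero, abs_of_neg h2]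
      exact lt_of_lt_of_le (by linarith) (min_le_right _ _)
    · -- G 0 = 0 : use the positive second-order slope
      have hslope : Tendsto (slope G 0) (𝓝[≠] (0:ℝ))
          (𝓝 (deriv D 0 - (lam ^ 2 * A + lam ^ 2 * B))) :=
        hasDerivAt_iff_tendsto_slope.mp hGd
      have hpos : ∀ᶠ r in 𝓝[≠] (0:ℝ), 0 < slope G 0 r :=
        hslope.eventually (eventually_gt_nhds hβ)
      rcases Metric.mem_nhdsWithin_iff.mp hpos with ⟨δ'', hδ''pos, hδ''⟩
      refine hKmono (min δ δ'') (lt_min hδpos hδ''pos) (min_le_left _ _) ?_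
      intro r h1 h2
      have hr : r ∈ Metric.ball (0:ℝ) δ'' ∩ {(0:ℝ)}ᶜ := by
        constructor
        · rw [Metric.mem_ball, Real.dist_eq, sub_zero, abs_of_pos h1]
          exact lt_of_lt_of_le h2 (min_le_right _ _)
        · exact ne_of_gt h1
      have := hδ'' hr
      simp only [Set.mem_setOf_eq] at this
      rw [slope_def_field, hb, sub_zero, sub_zero] at this
      have := mul_pos this h1
      rwa [div_mul_cancel₀ _ (ne_of_gt h1)] at this
    · -- G 0 > 0 : increasing to the right
      have : ∀ᶠ r in 𝓝 (0:ℝ), 0 < G r := hGc.eventually_const_lt hb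
      rcases Metric.eventually_nhds_iff.mp this with ⟨δ'', hδ''pos, hδ''⟩
      refine hKmono (min δ δ'') (lt_min hδpos hδ''pos) (min_le_left _ _) ?_
      intro r h1 h2
      apply hδ''
      rw [Real.dist_eq, sub_zero, abs_of_pos h1]
      exact lt_of_lt_of_le h2 (min_le_right _ _)
  · -- frequent junk case: the derivative of D at 0 is 0
    have hfreq : ∃ᶠ r in 𝓝[≠] (0:ℝ), ¬ DifferentiableAt ℝ h r := not_eventually.mp hev
    have hfreq0 : ∃ᶠ r in 𝓝[≠] (0:ℝ), D r = 0 :=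
      hfreq.mono fun r hr => deriv_zero_of_not_differentiableAt hr
    have hNB : (𝓝[≠] (0:ℝ) ⊓ 𝓟 {r | D r = 0}).NeBot := frequently_iff_neBot.mp hfreq0
    have hD0 : D 0 = 0 := by
      have h1 : Tendsto D (𝓝[≠] (0:ℝ) ⊓ 𝓟 {r | D r = 0}) (𝓝 (D 0)) :=
        (hDd.continuousAt.tendsto).mono_left (le_trans inf_le_left nhdsWithin_le_nhds)
      have h2 : Tendsto D (𝓝[≠] (0:ℝ) ⊓ 𝓟 {r | D r = 0}) (𝓝 0) := by
        apply Tendsto.congr' _ tendsto_const_nhds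
        exact (eventually_inf_principal.mpr (Eventually.of_forall fun r hr => hr.symm))
      exact tendsto_nhds_unique h1 h2
    have hslope : Tendsto (slope D 0) (𝓝[≠] (0:ℝ)) (𝓝 (deriv D 0)) :=
      hasDerivAt_iff_tendsto_slope.mp hDd.hasDerivAt
    have h1 : Tendsto (slope D 0) (𝓝[≠] (0:ℝ) ⊓ 𝓟 {r | D r = 0}) (𝓝 (deriv D 0)) :=
      hslope.mono_left inf_le_left
    have h2 : Tendsto (slope D 0) (𝓝[≠] (0:ℝ) ⊓ 𝓟 {r | D r = 0}) (𝓝 0) := by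
      apply Tendsto.congr' _ tendsto_const_nhds
      apply eventually_inf_principal.mpr
      apply Eventually.of_forall
      intro r hr
      rw [slope_def_field, hr, hD0]
      simp
    have : deriv D 0 = 0 := tendsto_nhds_unique h1 h2
    rw [show deriv (deriv h) 0 = deriv D 0 from rfl, this]
    positivity


lemma eq_of_hasDerivAt_zero_Ioi {F : ℝ → ℝ} {s₁ : ℝ}
    (hF : ∀ s, s₁ < s → HasDerivAt F 0 s) :
    ∀ a b, s₁ < a → s₁ < b → F a = F b := by
  have key : ∀ a b, s₁ < a → a < b → F a = F b := by
    intro a b ha hab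
    obtain ⟨ξ, hξ, h0⟩ := exists_hasDerivAt_eq_slope F (fun _ => 0) hab
      (fun x hx => (hF x (lt_of_lt_of_le ha hx.1)).continuousAt.continuousWithinAt)
      (fun x hx => hF x (ha.trans hx.1))
    have hba : b - a ≠ 0 := by linarith
    have := div_eq_zero_iff.mp h0.symm
    rcases this with h | h
    · linarith [sub_eq_zero.mp h]
    · exact absurd h hba
  intro a b ha hb
  rcases lt_trichotomy a b with h | h | h
  · exact key a b ha h
  · rw [h]
  · exact (key b a hb h).symm

section PartA
variable {M θ₁ m₁ α₁ : ℝ}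

lemma capF_nonneg (hθ : θ₁ ∈ Ioo (0:ℝ) (1/2)) (hα : 0 < α₁) (v : ℝ) :
    0 ≤ capF θ₁ m₁ α₁ v := by
  unfold capF
  split
  · next hv => exact mul_nonneg hα.le (Real.rpow_nonneg (by linarith [hv.2]) _)
  · exact le_rfl

lemma capF_zero_of_not_mem {v : ℝ} (hv : v ∉ Icc (1 - θ₁) 1) : capF θ₁ m₁ α₁ v = 0 :=
  if_neg hv

lemma capF_one (hθ : θ₁ ∈ Ioo (0:ℝ) (1/2)) (hm : 1 < m₁) : capF θ₁ m₁ α₁ 1 = 0 := by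
  unfold capF
  rw [if_pos (show (1:ℝ) ∈ Icc (1-θ₁) 1 from ⟨by linarith [hθ.1], le_refl 1⟩)]
  rw [sub_self, Real.zero_rpow (by linarith), mul_zero]

lemma F0_bddBelow (hθ : θ₁ ∈ Ioo (0:ℝ) (1/2)) (hM : 1 ≤ M) (hα : 0 < α₁) (u : ℝ) :
    BddBelow {y : ℝ | ∃ v : ℝ, y = capF θ₁ m₁ α₁ v + M * |u - v|} := by
  refine ⟨0, ?_⟩
  rintro y ⟨v, rfl⟩
  exact add_nonneg (capF_nonneg hθ hα v) (mul_nonneg (by linarith) (abs_nonneg _))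

lemma F0_le (hθ : θ₁ ∈ Ioo (0:ℝ) (1/2)) (hM : 1 ≤ M) (hα : 0 < α₁) (u v : ℝ) :
    F0 M θ₁ m₁ α₁ u ≤ capF θ₁ m₁ α₁ v + M * |u - v| :=
  csInf_le (F0_bddBelow hθ hM hα u) ⟨v, rfl⟩

lemma F0_nonneg (hθ : θ₁ ∈ Ioo (0:ℝ) (1/2)) (hM : 1 ≤ M) (hα : 0 < α₁) (u : ℝ) :
    0 ≤ F0 M θ₁ m₁ α₁ u := by
  refine le_csInf ⟨capF θ₁ m₁ α₁ u + M * |u - u|, u, rfl⟩ ?_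
  rintro y ⟨v, rfl⟩
  exact add_nonneg (capF_nonneg hθ hα v) (mul_nonneg (by linarith) (abs_nonneg _))

lemma F0_zero_of_le (hθ : θ₁ ∈ Ioo (0:ℝ) (1/2)) (hM : 1 ≤ M) (hα : 0 < α₁)
    {u : ℝ} (hu : u ≤ 1 - θ₁) : F0 M θ₁ m₁ α₁ u = 0 := by
  refine le_antisymm ?_ (F0_nonneg hθ hM hα u)
  rcases lt_or_eq_of_le hu with hu' | hu'
  · have h := F0_le (m₁ := m₁) hθ hM hα u u
    rw [capF_zero_of_not_mem (fun hmem => absurd hmem.1 (not_le.mpr hu'))] at h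
    simpa using h
  · have key : ∀ ε : ℝ, 0 < ε → F0 M θ₁ m₁ α₁ u ≤ M * ε := by
      intro ε hε
      have := F0_le (m₁ := m₁) hθ hM hα u (u - ε)
      rwa [capF_zero_of_not_mem (fun hmem => by
        have h := hmem.1; rw [← hu'] at h; linarith), zero_add,
        show u - (u - ε) = ε by ring, abs_of_pos hε] at this
    by_contra hcon
    push_neg at hcon
    have hM0 : (0:ℝ) < M := by linarith
    have h6 := key (F0 M θ₁ m₁ α₁ u / (2 * M)) (by positivity)
    have h7 : M * (F0 M θ₁ m₁ α₁ u / (2 * M)) = F0 M θ₁ m₁ α₁ u / 2 := by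
      field_simp
    rw [h7] at h6
    linarith

lemma F0_zero_of_ge (hθ : θ₁ ∈ Ioo (0:ℝ) (1/2)) (hM : 1 ≤ M) (hm : 1 < m₁) (hα : 0 < α₁)
    {u : ℝ} (hu : 1 ≤ u) : F0 M θ₁ m₁ α₁ u = 0 := by
  refine le_antisymm ?_ (F0_nonneg hθ hM hα u)
  rcases eq_or_lt_of_le hu with hu' | hu'
  · rw [← hu']
    have h := F0_le (m₁ := m₁) hθ hM hα u 1
    rw [capF_one hθ hm, ← hu'] at h
    simpa using h
  · have h := F0_le (m₁ := m₁) hθ hM hα u u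
    rw [capF_zero_of_not_mem (fun hmem => absurd hmem.2 (not_le.mpr hu'))] at h
    simpa using h

lemma F0_le_M_mul (hθ : θ₁ ∈ Ioo (0:ℝ) (1/2)) (hM : 1 ≤ M) (hm : 1 < m₁) (hα : 0 < α₁)
    {u : ℝ} (hu : u ≤ 1) : F0 M θ₁ m₁ α₁ u ≤ M * (1 - u) := by
  have := F0_le (m₁ := m₁) hθ hM hα u 1
  rwa [capF_one hθ hm, zero_add, abs_of_nonpos (by linarith), neg_sub] at this

lemma F0_lip (hθ : θ₁ ∈ Ioo (0:ℝ) (1/2)) (hM : 1 ≤ M) (hα : 0 < α₁) (u w : ℝ) :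
    F0 M θ₁ m₁ α₁ u ≤ F0 M θ₁ m₁ α₁ w + M * |u - w| := by
  rw [show F0 M θ₁ m₁ α₁ w + M * |u - w| = M * |u - w| + F0 M θ₁ m₁ α₁ w by ring,
    ← sub_le_iff_le_add']
  refine le_csInf ⟨capF θ₁ m₁ α₁ w + M * |w - w|, w, rfl⟩ ?_
  rintro y ⟨v, rfl⟩
  have h1 := F0_le (m₁ := m₁) hθ hM hα u v
  have h2 : |u - v| ≤ |u - w| + |w - v| := abs_sub_le u w v
  have hM0 : (0:ℝ) ≤ M := by linarith
  nlinarith [abs_nonneg (u - v), abs_nonneg (w - v)]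

lemma F0_continuous (hθ : θ₁ ∈ Ioo (0:ℝ) (1/2)) (hM : 1 ≤ M) (hα : 0 < α₁) :
    Continuous (F0 M θ₁ m₁ α₁) := by
  have : LipschitzWith (Real.toNNReal M) (F0 M θ₁ m₁ α₁) := by
    apply LipschitzWith.of_dist_le_mul
    intro u w
    rw [Real.dist_eq, Real.dist_eq, Real.coe_toNNReal _ (by linarith)]
    rw [abs_sub_le_iff]
    constructor
    · linarith [F0_lip (m₁ := m₁) hθ hM hα u w]
    · have := F0_lip (m₁ := m₁) hθ hM hα w u
      rw [abs_sub_comm] at this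
      linarith
  exact this.continuous

/-- Any traveling front speed of `F0` is at most `√(2M)·θ₁/(1-θ₁)`. -/
lemma frontSpeed_le (hθ : θ₁ ∈ Ioo (0:ℝ) (1/2)) (hM : 1 ≤ M) (hm : 1 < m₁) (hα : 0 < α₁)
    {c : ℝ} (hc : IsTravelingFrontSpeed (F0 M θ₁ m₁ α₁) c) :
    c ≤ Real.sqrt (2 * M) * (θ₁ / (1 - θ₁)) := by
  set θ₀ := 1 - θ₁ with hθ₀
  have hθ₀pos : 0 < θ₀ := by rw [hθ₀]; linarith [hθ.2]
  have hθ₀lt : θ₀ < 1 := by rw [hθ₀]; linarith [hθ.1]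
  clear_value θ₀
  set Bd := Real.sqrt (2 * M) * (θ₁ / θ₀) with hBd
  have hBd0 : 0 ≤ Bd := mul_nonneg (Real.sqrt_nonneg _) (div_nonneg hθ.1.le hθ₀pos.le)
  by_contra hcon
  push_neg at hcon
  have hcpos : 0 < c := lt_of_le_of_lt hBd0 hcon
  obtain ⟨U, hU1, hU2, hbot, htop⟩ := hc
  set g : ℝ → ℝ := deriv U with hgdef
  have hUc : Continuous U := by
    apply continuous_iff_continuousAt.mpr
    intro s; exact (hU1 s).continuousAt
  have hgc : Continuous g := by
    apply continuous_iff_continuousAt.mpr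
    intro s; exact (hU2 s).differentiableAt.continuousAt
  -- the potential Φ
  set Φ : ℝ → ℝ := fun u => ∫ v in (0:ℝ)..u, F0 M θ₁ m₁ α₁ v with hΦdef
  have hF0c := F0_continuous (m₁ := m₁) hθ hM hα
  have hΦd : ∀ u : ℝ, HasDerivAt Φ (F0 M θ₁ m₁ α₁ u) u := fun u =>
    intervalIntegral.integral_hasDerivAt_right (hF0c.intervalIntegrable _ _)
      (hF0c.stronglyMeasurableAtFilter volume (nhds u)) hF0c.continuousAt
  have hΦmono : ∀ a b : ℝ, a ≤ b → Φ a ≤ Φ b := by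
    intro a b hab
    have hadd := intervalIntegral.integral_add_adjacent_intervals (μ := volume)
      (hF0c.intervalIntegrable 0 a) (hF0c.intervalIntegrable a b)
    have hnn : 0 ≤ ∫ v in a..b, F0 M θ₁ m₁ α₁ v :=
      intervalIntegral.integral_nonneg hab (fun x _ => F0_nonneg hθ hM hα x)
    simp only [hΦdef]
    linarith [hadd]
  have hΦθ₀ : Φ θ₀ = 0 := by
    have hcong : ∀ v ∈ Set.uIcc (0:ℝ) θ₀, F0 M θ₁ m₁ α₁ v = (fun _ => (0:ℝ)) v := by
      intro v hv
      rw [uIcc_of_le hθ₀pos.le] at hv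
      exact F0_zero_of_le hθ hM hα (by rw [← hθ₀]; exact hv.2)
    calc Φ θ₀ = ∫ v in (0:ℝ)..θ₀, (0:ℝ) := intervalIntegral.integral_congr hcong
    _ = 0 := by simp
  have hΦ1 : Φ 1 ≤ M * θ₁ ^ 2 := by
    have hadd := intervalIntegral.integral_add_adjacent_intervals (μ := volume)
      (hF0c.intervalIntegrable 0 θ₀) (hF0c.intervalIntegrable θ₀ 1)
    have h2 : (∫ v in θ₀..(1:ℝ), F0 M θ₁ m₁ α₁ v) ≤ ∫ v in θ₀..(1:ℝ), M * θ₁ := by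
      apply intervalIntegral.integral_mono_on hθ₀lt.le (hF0c.intervalIntegrable _ _)
        intervalIntegrable_const
      intro v hv
      have h3 : F0 M θ₁ m₁ α₁ v ≤ M * (1 - v) := F0_le_M_mul hθ hM hm hα hv.2
      have h4 : 1 - v ≤ θ₁ := by
        have := hv.1; rw [hθ₀] at this; linarith
      nlinarith
    have h5 : (∫ v in θ₀..(1:ℝ), (M * θ₁ : ℝ)) = M * θ₁ ^ 2 := by
      rw [intervalIntegral.integral_const, smul_eq_mul]
      rw [hθ₀]; ring
    have h6 : (∫ v in (0:ℝ)..θ₀, F0 M θ₁ m₁ α₁ v) = 0 := hΦθ₀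
    simp only [hΦdef]
    rw [← hadd, h6, zero_add]
    linarith
  have hΦle : ∀ u : ℝ, Φ u ≤ M * θ₁ ^ 2 := by
    intro u
    rcases le_total u 1 with h | h
    · exact le_trans (hΦmono u 1 h) hΦ1
    · have hadd := intervalIntegral.integral_add_adjacent_intervals (μ := volume)
        (hF0c.intervalIntegrable 0 1) (hF0c.intervalIntegrable 1 u)
      have hz : (∫ v in (1:ℝ)..u, F0 M θ₁ m₁ α₁ v) = 0 := by
        have hcong : ∀ v ∈ Set.uIcc (1:ℝ) u, F0 M θ₁ m₁ α₁ v = (fun _ => (0:ℝ)) v := by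
          intro v hv
          rw [uIcc_of_le h] at hv
          exact F0_zero_of_ge hθ hM hm hα hv.1
        calc (∫ v in (1:ℝ)..u, F0 M θ₁ m₁ α₁ v) = ∫ v in (1:ℝ)..u, (0:ℝ) :=
          intervalIntegral.integral_congr hcong
        _ = 0 := by simp
      have : Φ u = Φ 1 := by simp only [hΦdef]; rw [← hadd, hz, add_zero]
      rw [this]; exact hΦ1
  -- the energy E
  set E : ℝ → ℝ := fun s => (g s) ^ 2 / 2 + Φ (U s) with hEdef
  have hEd : ∀ s, HasDerivAt E (-(c * (g s) ^ 2)) s := by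
    intro s
    have h1 : HasDerivAt (fun s => (g s) ^ 2)
        ((2:ℕ) * (g s) ^ 1 * (-(c * g s) - F0 M θ₁ m₁ α₁ (U s))) s := (hU2 s).pow 2
    have h2 : HasDerivAt (fun s => Φ (U s)) (F0 M θ₁ m₁ α₁ (U s) * deriv U s) s :=
      (hΦd (U s)).comp s (hU1 s).hasDerivAt
    have h3 := (h1.div_const 2).add h2
    refine h3.congr_deriv ?_
    push_cast
    ring
  have hEmono : Antitone E := by
    apply antitone_of_deriv_nonpos (fun s => (hEd s).differentiableAt)
    intro s
    rw [(hEd s).deriv]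
    nlinarith [sq_nonneg (g s)]
  -- the last crossing point s₁
  set T : Set ℝ := {s | θ₀ ≤ U s} with hT
  have hTclosed : IsClosed T := isClosed_le continuous_const hUc
  have hTne : T.Nonempty := by
    have h := hbot.eventually (eventually_gt_nhds hθ₀lt)
    rcases h.exists with ⟨s, hs⟩
    exact ⟨s, hs.le⟩
  have hTbdd : BddAbove T := by
    have h := htop.eventually (eventually_lt_nhds hθ₀pos)
    rcases eventually_atTop.mp h with ⟨N, hN⟩
    refine ⟨N, fun s hs => ?_⟩
    by_contra hcon2
    push_neg at hcon2
    have := hN s hcon2.le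
    exact absurd hs (by simp only [hT, mem_setOf_eq]; push_neg; linarith)
  set s₁ := sSup T with hs₁def
  have hs₁T : s₁ ∈ T := hTclosed.csSup_mem hTne hTbdd
  have hUlt : ∀ s, s₁ < s → U s < θ₀ := by
    intro s hs
    by_contra hcon2
    push_neg at hcon2
    exact absurd (le_csSup hTbdd hcon2) (not_le.mpr hs)
  have hUs₁ : U s₁ = θ₀ := by
    refine le_antisymm ?_ hs₁T
    have hlim : Tendsto U (𝓝[>] s₁) (𝓝 (U s₁)) := (hUc.tendsto s₁).mono_left nhdsWithin_le_nhds
    apply le_of_tendsto hlim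
    filter_upwards [self_mem_nhdsWithin] with s hs
    exact (hUlt s hs).le
  -- linear ODE beyond s₁
  have hgd' : ∀ s, s₁ < s → HasDerivAt g (-(c * g s)) s := by
    intro s hs
    have h := hU2 s
    rwa [F0_zero_of_le hθ hM hα (by rw [← hθ₀]; exact (hUlt s hs).le), sub_zero] at h
  set Hf : ℝ → ℝ := fun s => g s * Real.exp (c * s) with hHf
  have hHd : ∀ s, s₁ < s → HasDerivAt Hf 0 s := by
    intro s hs
    have hce : HasDerivAt (fun s : ℝ => Real.exp (c * s)) (Real.exp (c * s) * c) s := by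
      have := ((hasDerivAt_id s).const_mul c).exp
      simpa using this
    have h1 := (hgd' s hs).mul hce
    refine h1.congr_deriv ?_
    ring
  have hHconst := eq_of_hasDerivAt_zero_Ioi hHd
  set K := Hf (s₁ + 1) with hK
  have hgK : ∀ s, s₁ < s → g s = K * Real.exp (-(c * s)) := by
    intro s hs
    have h1 : Hf s = K := hHconst s (s₁ + 1) hs (by linarith)
    have h2 : g s * Real.exp (c * s) = K := h1
    rw [Real.exp_neg]
    field_simp
    linarith [h2]
  set Wf : ℝ → ℝ := fun s => U s + (K / c) * Real.exp (-(c * s)) with hWf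
  have hWd : ∀ s, s₁ < s → HasDerivAt Wf 0 s := by
    intro s hs
    have h1 : HasDerivAt (fun s : ℝ => Real.exp (-(c * s))) (Real.exp (-(c * s)) * (-c)) s := by
      have h0 : HasDerivAt (fun s : ℝ => -(c * s)) (-c) s := by
        have := ((hasDerivAt_id s).const_mul c).neg
        exact this.congr_deriv (by ring)
      exact h0.exp
    have h2 := (h1.const_mul (K / c))
    have h3 := (hU1 s).hasDerivAt.add h2
    refine h3.congr_deriv ?_
    rw [show deriv U s = g s from rfl, hgK s hs]
    have hc0 : c ≠ 0 := ne_of_gt hcpos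
    have h4 : K / c * (Real.exp (-(c * s)) * -c) = -(K * Real.exp (-(c * s))) := by
      field_simp
    rw [h4]
    ring
  have hWconst := eq_of_hasDerivAt_zero_Ioi hWd
  have hWlim : Tendsto Wf atTop (𝓝 0) := by
    have h1 : Tendsto (fun s : ℝ => c * s) atTop atTop :=
      Tendsto.const_mul_atTop hcpos tendsto_id
    have h2 : Tendsto (fun s : ℝ => -(c * s)) atTop atBot := tendsto_neg_atTop_atBot.comp h1
    have h3 : Tendsto (fun s : ℝ => Real.exp (-(c * s))) atTop (𝓝 0) :=
      Real.tendsto_exp_atBot.comp h2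
    have h4 := htop.add ((h3.const_mul (K / c)))
    simpa using h4
  have hWzero : ∀ s, s₁ < s → Wf s = 0 := by
    intro s hs
    have h1 : Tendsto Wf atTop (𝓝 (Wf s)) := by
      apply Tendsto.congr' _ (tendsto_const_nhds (x := Wf s))
      filter_upwards [eventually_gt_atTop s₁] with b hb
      exact hWconst s b hs hb
    exact (tendsto_nhds_unique h1 hWlim) ▸ rfl
  have hgU : ∀ s, s₁ < s → g s = -c * U s := by
    intro s hs
    have hc0 : c ≠ 0 := ne_of_gt hcpos
    have h1 : U s + K / c * Real.exp (-(c * s)) = 0 := hWzero s hs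
    have h2 : U s = -(K / c * Real.exp (-(c * s))) := by linarith
    rw [hgK s hs, h2]
    field_simp
  have hgs₁ : g s₁ = -c * θ₀ := by
    have h1 : Tendsto g (𝓝[>] s₁) (𝓝 (g s₁)) := (hgc.tendsto s₁).mono_left nhdsWithin_le_nhds
    have h2 : Tendsto (fun s => -c * U s) (𝓝[>] s₁) (𝓝 (-c * θ₀)) := by
      have := ((hUc.tendsto s₁).mono_left (nhdsWithin_le_nhds (s := Ioi s₁))).const_mul (-c)
      rwa [hUs₁] at this
    have h3 : Tendsto g (𝓝[>] s₁) (𝓝 (-c * θ₀)) := by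
      apply h2.congr'
      filter_upwards [self_mem_nhdsWithin] with s hs
      exact (hgU s hs).symm
    exact tendsto_nhds_unique h1 h3
  have hEs₁ : E s₁ = c ^ 2 * θ₀ ^ 2 / 2 := by
    simp only [hEdef]
    rw [hgs₁, hUs₁, hΦθ₀]
    ring
  have hglow : ∀ s, s ≤ s₁ → c ^ 2 * θ₀ ^ 2 - 2 * (M * θ₁ ^ 2) ≤ (g s) ^ 2 := by
    intro s hs
    have h1 : E s₁ ≤ E s := hEmono hs
    have h2 := hΦle (U s)
    rw [hEs₁] at h1
    simp only [hEdef] at h1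
    linarith
  have hD2 : 0 < c ^ 2 * θ₀ ^ 2 - 2 * (M * θ₁ ^ 2) := by
    have h1 : Real.sqrt (2 * M) * θ₁ < c * θ₀ := by
      have h0 : Bd * θ₀ < c * θ₀ := by
        apply mul_lt_mul_of_pos_right hcon hθ₀pos
      have h2 : Bd * θ₀ = Real.sqrt (2 * M) * θ₁ := by
        rw [hBd]
        field_simp
      linarith
    have h2 : (Real.sqrt (2 * M) * θ₁) ^ 2 = 2 * M * θ₁ ^ 2 := by
      rw [mul_pow, Real.sq_sqrt (by linarith)]
    have h3 : (Real.sqrt (2 * M) * θ₁) * (Real.sqrt (2 * M) * θ₁) < (c * θ₀) * (c * θ₀) :=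
      mul_self_lt_mul_self (mul_nonneg (Real.sqrt_nonneg _) hθ.1.le) h1
    have h4 : (c * θ₀) * (c * θ₀) = c ^ 2 * θ₀ ^ 2 := by ring
    have h5 : (Real.sqrt (2 * M) * θ₁) * (Real.sqrt (2 * M) * θ₁) = 2 * M * θ₁ ^ 2 := by
      rw [← h2]; ring
    linarith
  set δv := Real.sqrt (c ^ 2 * θ₀ ^ 2 - 2 * (M * θ₁ ^ 2)) with hδv
  have hδvpos : 0 < δv := Real.sqrt_pos.mpr hD2
  have hgneg : ∀ s, s ≤ s₁ → g s ≤ -δv := by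
    intro s hs
    have h0 : g s < 0 := by
      rcases eq_or_lt_of_le hs with rfl | hlt
      · rw [hgs₁]; nlinarith
      · by_contra hcon2
        push_neg at hcon2
        have hiv : (0:ℝ) ∈ Set.Icc (g s₁) (g s) := ⟨by rw [hgs₁]; nlinarith, hcon2⟩
        obtain ⟨ξ, hξ, hgξ⟩ := intermediate_value_Icc' hlt.le hgc.continuousOn hiv
        have := hglow ξ hξ.2
        rw [hgξ] at this
        nlinarith
    have h1 := hglow s hs
    have h2 : δv ≤ |g s| := by
      rw [← Real.sqrt_sq_eq_abs]
      exact Real.sqrt_le_sqrt h1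
    rw [abs_of_neg h0] at h2
    linarith
  have hUb := hbot.eventually (eventually_lt_nhds (show (1:ℝ) < 2 by norm_num))
  rcases eventually_atBot.mp hUb with ⟨N, hN⟩
  set s₃ := min N (s₁ - 3 / δv) with hs₃
  have hs₃le : s₃ ≤ s₁ - 3 / δv := min_le_right _ _
  have h3dv : 0 < 3 / δv := by positivity
  have hs₃lt : s₃ < s₁ := by linarith
  obtain ⟨ξ, hξ, hslope⟩ := exists_hasDerivAt_eq_slope U g hs₃lt hUc.continuousOn
    (fun x _ => (hU1 x).hasDerivAt)
  have h1 : g ξ ≤ -δv := hgneg ξ hξ.2.le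
  have h2 : U s₃ < 2 := hN s₃ (min_le_left _ _)
  have h3 : 3 / δv ≤ s₁ - s₃ := by linarith
  have h4 : U s₁ - U s₃ = g ξ * (s₁ - s₃) := by
    rw [hslope]
    exact (div_mul_cancel₀ _ (by linarith : s₁ - s₃ ≠ 0)).symm
  have h5 : g ξ * (s₁ - s₃) ≤ -δv * (3 / δv) := by
    have hsub : 0 < s₁ - s₃ := by linarith
    have h5a : g ξ * (s₁ - s₃) ≤ -δv * (s₁ - s₃) := mul_le_mul_of_nonneg_right h1 hsub.le
    have h5b : -δv * (s₁ - s₃) ≤ -δv * (3 / δv) :=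
      mul_le_mul_of_nonpos_left h3 (by linarith)
    linarith
  have h6 : -δv * (3 / δv) = -3 := by field_simp
  rw [hUs₁] at h4
  linarith
end PartA



lemma c0_lt_c1 {d : ℕ} {M θ₁ m₁ α₁ : ℝ} (hd : 1 ≤ d) (hM : 1 ≤ M)
    (hθ : θ₁ ∈ Ioo (0:ℝ) (1/2)) (hm : 1 < m₁) (hα : 0 < α₁) :
    c0 M θ₁ m₁ α₁ < c1 d M := by
  have hd' : (1:ℝ) ≤ (d:ℝ) := by exact_mod_cast hd
  have hc1pos : 0 < c1 d M := by
    unfold c1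
    have : (0:ℝ) < M * d := by nlinarith
    positivity
  have hBlt : Real.sqrt (2 * M) * (θ₁ / (1 - θ₁)) < c1 d M := by
    have h1 : θ₁ / (1 - θ₁) < 1 := (div_lt_one (by linarith [hθ.2])).mpr (by linarith [hθ.2])
    have h2 : 0 < Real.sqrt (2 * M) := Real.sqrt_pos.mpr (by linarith)
    have h1' : 0 ≤ θ₁ / (1 - θ₁) := div_nonneg hθ.1.le (by linarith [hθ.2])
    have h3 : Real.sqrt (2 * M) * (θ₁ / (1 - θ₁)) < Real.sqrt (2 * M) := by nlinarith
    have h4 : Real.sqrt (2 * M) ≤ c1 d M := by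
      unfold c1
      have he : (2:ℝ) * Real.sqrt (M * d) = Real.sqrt (4 * (M * d)) := by
        rw [show (4:ℝ) * (M * d) = 2 ^ 2 * (M * d) by ring,
          Real.sqrt_mul (by positivity : (0:ℝ) ≤ (2:ℝ) ^ 2) (M * d),
          Real.sqrt_sq (by norm_num : (0:ℝ) ≤ (2:ℝ))]
      rw [he]
      exact Real.sqrt_le_sqrt (by nlinarith)
    linarith
  rcases eq_empty_or_nonempty {c : ℝ | IsTravelingFrontSpeed (F0 M θ₁ m₁ α₁) c} with hS | hS
  · unfold c0
    rw [hS, Real.sSup_empty]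
    linarith
  · exact lt_of_le_of_lt (csSup_le hS (fun c hc => frontSpeed_le hθ hM hm hα hc)) hBlt


/-! ### The barrier -/

noncomputable def barrier {d : ℕ} (θ₁ ε M lam b : ℝ) (x₀ : Euc d) (s : ℝ) (y : Euc d) : ℝ :=
  θ₁ + ε * Real.exp (2 * M * s) +
    ∑ i : Fin d, (Real.exp (lam * ((y i - x₀ i) - b) + 2 * M * s)
      + Real.exp (lam * (-(y i - x₀ i) - b) + 2 * M * s))

section Barrier
variable {d : ℕ} (θ₁ ε M lam b : ℝ) (x₀ : Euc d)

lemma barrier_continuous :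
    Continuous fun p : ℝ × Euc d => barrier θ₁ ε M lam b x₀ p.1 p.2 := by
  unfold barrier
  have hproj : ∀ i : Fin d, Continuous fun p : ℝ × Euc d => p.2 i := fun i =>
    ((continuous_apply i).comp (PiLp.continuous_ofLp 2 _)).comp continuous_snd
  apply Continuous.add
  · exact continuous_const.add
      (continuous_const.mul (Real.continuous_exp.comp (continuous_const.mul continuous_fst)))
  · apply continuous_finset_sum
    intro i _
    apply Continuous.add
    · apply Real.continuous_exp.comp
      exact (continuous_const.mul (((hproj i).sub continuous_const).sub continuous_const)).add
        (continuous_const.mul continuous_fst)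
    · apply Real.continuous_exp.comp
      exact (continuous_const.mul ((((hproj i).sub continuous_const).neg).sub
        continuous_const)).add (continuous_const.mul continuous_fst)

lemma barrier_hasDerivAt (y : Euc d) (τ : ℝ) :
    HasDerivAt (fun s => barrier θ₁ ε M lam b x₀ s y)
      (2 * M * (ε * Real.exp (2 * M * τ)) +
        ∑ i : Fin d, (2 * M * Real.exp (lam * ((y i - x₀ i) - b) + 2 * M * τ)
          + 2 * M * Real.exp (lam * (-(y i - x₀ i) - b) + 2 * M * τ))) τ := by
  have hlin : ∀ a : ℝ, HasDerivAt (fun s : ℝ => Real.exp (a + 2 * M * s))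
      (2 * M * Real.exp (a + 2 * M * τ)) τ := by
    intro a
    have h1 : HasDerivAt (fun s : ℝ => a + 2 * M * s) (2 * M) τ := by
      simpa using ((hasDerivAt_id τ).const_mul (2 * M)).const_add a
    have h2 := h1.exp
    convert h2 using 1
    ring
  have h0 : HasDerivAt (fun s : ℝ => Real.exp (2 * M * s)) (2 * M * Real.exp (2 * M * τ)) τ := by
    have := ((hasDerivAt_id τ).const_mul (2 * M)).exp
    simp only [id_eq] at this
    convert this using 1
    ring
  have hsum : HasDerivAt
      (fun s => ∑ i : Fin d, (Real.exp (lam * ((y i - x₀ i) - b) + 2 * M * s)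
        + Real.exp (lam * (-(y i - x₀ i) - b) + 2 * M * s)))
      (∑ i : Fin d, (2 * M * Real.exp (lam * ((y i - x₀ i) - b) + 2 * M * τ)
        + 2 * M * Real.exp (lam * (-(y i - x₀ i) - b) + 2 * M * τ))) τ :=
    HasDerivAt.fun_sum (fun i _ => (hlin _).add (hlin _))
  have hfinal := (((h0.const_mul ε).const_add θ₁).add hsum)
  refine hfinal.congr_deriv ?_
  ring

lemma barrier_slice (s : ℝ) (y₀ : Euc d) (i : Fin d) (r : ℝ) :
    barrier θ₁ ε M lam b x₀ s (y₀ + r • EuclideanSpace.single i (1:ℝ))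
      = (barrier θ₁ ε M lam b x₀ s y₀
          - (Real.exp (lam * ((y₀ i - x₀ i) - b) + 2 * M * s)
             + Real.exp (lam * (-(y₀ i - x₀ i) - b) + 2 * M * s)))
        + Real.exp (lam * ((y₀ i - x₀ i) - b) + 2 * M * s) * Real.exp (lam * r)
        + Real.exp (lam * (-(y₀ i - x₀ i) - b) + 2 * M * s) * Real.exp (-(lam * r)) := by
  classical
  have hcoord : ∀ j : Fin d, (y₀ + r • EuclideanSpace.single i (1:ℝ)) j
      = y₀ j + (if j = i then r else 0) := by
    intro j
    simp [EuclideanSpace.single_apply, mul_ite]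
  unfold barrier
  rw [Finset.sum_eq_sum_sdiff_singleton_add (Finset.mem_univ i)
    (fun j => Real.exp (lam * (((y₀ + r • EuclideanSpace.single i (1:ℝ)) j - x₀ j) - b) + 2 * M * s)
      + Real.exp (lam * (-((y₀ + r • EuclideanSpace.single i (1:ℝ)) j - x₀ j) - b) + 2 * M * s)),
    Finset.sum_eq_sum_sdiff_singleton_add (Finset.mem_univ i)
    (fun j => Real.exp (lam * ((y₀ j - x₀ j) - b) + 2 * M * s)
      + Real.exp (lam * (-(y₀ j - x₀ j) - b) + 2 * M * s))]
  have hrest : ∑ j ∈ Finset.univ \ {i},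
      (Real.exp (lam * (((y₀ + r • EuclideanSpace.single i (1:ℝ)) j - x₀ j) - b) + 2 * M * s)
        + Real.exp (lam * (-((y₀ + r • EuclideanSpace.single i (1:ℝ)) j - x₀ j) - b) + 2 * M * s))
      = ∑ j ∈ Finset.univ \ {i},
      (Real.exp (lam * ((y₀ j - x₀ j) - b) + 2 * M * s)
        + Real.exp (lam * (-(y₀ j - x₀ j) - b) + 2 * M * s)) := by
    apply Finset.sum_congr rfl
    intro j hj
    have hji : j ≠ i := by
      rcases Finset.mem_sdiff.mp hj with ⟨_, h2⟩
      simpa using h2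
    rw [hcoord j, if_neg hji, add_zero]
  rw [hrest, hcoord i, if_pos rfl]
  have he1 : Real.exp (lam * ((y₀ i + r - x₀ i) - b) + 2 * M * s)
      = Real.exp (lam * ((y₀ i - x₀ i) - b) + 2 * M * s) * Real.exp (lam * r) := by
    rw [← Real.exp_add]
    congr 1
    ring
  have he2 : Real.exp (lam * (-(y₀ i + r - x₀ i) - b) + 2 * M * s)
      = Real.exp (lam * (-(y₀ i - x₀ i) - b) + 2 * M * s) * Real.exp (-(lam * r)) := by
    rw [← Real.exp_add]
    congr 1
    ring
  rw [he1, he2]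
  ring

end Barrier

lemma part2 {d : ℕ} (hd : 1 ≤ d) {M θ₁ : ℝ} (hM : 1 ≤ M) (hθ : θ₁ ∈ Ioo (0:ℝ) (1/2))
    (g : Euc d → ℝ → ℝ) (hgθ : ∀ x : Euc d, g x θ₁ = 0)
    (hglip : ∀ x : Euc d, LipschitzWith (Real.toNNReal M) fun v => g x v)
    (u : ℝ → Euc d → ℝ) (hu : SolvesRD g u) (t : ℝ) (ht : 0 ≤ t) :
    {x : Euc d | 1 - θ₁ ≤ u t x} ⊆
      nbhd (c1 d M * t + (1 + Real.sqrt ((d:ℝ) / M) * Real.log (2 * d / (1 - 2 * θ₁))))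
        {x : Euc d | θ₁ ≤ u 0 x} := by
  intro x₀ hx₀
  by_contra hx₀n
  simp only [Set.mem_setOf_eq] at hx₀
  -- basic constants
  have hdR : (1:ℝ) ≤ (d:ℝ) := by exact_mod_cast hd
  have hMpos : (0:ℝ) < M := by linarith
  have hNEfin : Nonempty (Fin d) := ⟨⟨0, by omega⟩⟩
  set lam := Real.sqrt M with hlam
  have hlampos : 0 < lam := Real.sqrt_pos.mpr hMpos
  have hlamne : lam ≠ 0 := ne_of_gt hlampos
  have hlamsq : lam ^ 2 = M := Real.sq_sqrt hMpos.le
  have hlam2 : lam * lam = M := Real.mul_self_sqrt hMpos.le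
  set sd := Real.sqrt (d:ℝ) with hsd
  have hsdpos : 0 < sd := Real.sqrt_pos.mpr (by linarith)
  have hsdne : sd ≠ 0 := ne_of_gt hsdpos
  have hsd2 : sd * sd = (d:ℝ) := Real.mul_self_sqrt (by linarith)
  set L := Real.log (2 * d / (1 - 2 * θ₁)) with hL
  have h2θ : 0 < 1 - 2 * θ₁ := by linarith [hθ.2]
  have hargpos : 0 < 2 * (d:ℝ) / (1 - 2 * θ₁) := div_pos (by linarith) h2θ
  have hLpos : 0 < L := Real.log_pos (by rw [lt_div_iff₀ h2θ]; nlinarith [hθ.1])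
  set R := c1 d M * t + (1 + Real.sqrt ((d:ℝ) / M) * L) with hR
  have hc1nn : 0 ≤ c1 d M := by
    unfold c1; positivity
  have hsq : Real.sqrt ((d:ℝ) / M) = sd / lam := by
    rw [Real.sqrt_div (by linarith : (0:ℝ) ≤ (d:ℝ)) M, ← hsd, ← hlam]
  have hRpos : 0 < R := by
    rw [hR]
    have h1 : 0 ≤ Real.sqrt ((d:ℝ) / M) * L := mul_nonneg (Real.sqrt_nonneg _) hLpos.le
    nlinarith [mul_nonneg hc1nn ht]
  set b := R / sd with hb
  have hbpos : 0 < b := div_pos hRpos hsdpos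
  set k := lam / sd with hk
  have hkpos : 0 < k := div_pos hlampos hsdpos
  have hek : Real.exp (-k) < 1 := by
    rw [Real.exp_lt_one_iff]
    linarith
  set ε := (1 - 2 * θ₁) * (1 - Real.exp (-k)) / (2 * Real.exp (2 * M * t)) with hε
  have hεpos : 0 < ε := div_pos (mul_pos h2θ (by linarith)) (by positivity)
  have hc1eq : c1 d M = 2 * (lam * sd) := by
    unfold c1
    rw [Real.sqrt_mul hMpos.le, ← hlam, ← hsd]
  have hkey : lam * b = 2 * M * t + k + L := by
    have h1 : lam * c1 d M = 2 * M * sd := by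
      rw [hc1eq]
      linear_combination 2 * sd * hlam2
    rw [hb, hR, hk, hsq]
    field_simp
    linear_combination t * h1
  -- abbreviations for the barrier
  set V : ℝ → Euc d → ℝ := fun s y => barrier θ₁ ε M lam b x₀ s y with hV
  have hVdef : ∀ s y, V s y = θ₁ + ε * Real.exp (2 * M * s) +
      ∑ i : Fin d, (Real.exp (lam * ((y i - x₀ i) - b) + 2 * M * s)
        + Real.exp (lam * (-(y i - x₀ i) - b) + 2 * M * s)) := fun s y => rfl
  have hVcont : Continuous fun p : ℝ × Euc d => V p.1 p.2 := barrier_continuous θ₁ ε M lam b x₀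
  have hsum_pos : ∀ (s : ℝ) (y : Euc d), 0 < ∑ i : Fin d,
      (Real.exp (lam * ((y i - x₀ i) - b) + 2 * M * s)
        + Real.exp (lam * (-(y i - x₀ i) - b) + 2 * M * s)) := by
    intro s y
    apply Finset.sum_pos (fun i _ => by positivity) Finset.univ_nonempty
  have hVgt : ∀ (s : ℝ) (y : Euc d), θ₁ + ε * Real.exp (2 * M * s) < V s y := by
    intro s y
    rw [hVdef]
    linarith [hsum_pos s y]
  -- continuity of u slices
  have hut : ∀ s : ℝ, 0 ≤ s → Continuous (u s) := by
    intro s hs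
    have h1 := hu.1.comp_continuous (Continuous.prodMk_right s) (fun y => ⟨hs, trivial⟩)
    exact h1
  -- initial data information
  have hball : ∀ y : Euc d, dist y x₀ < R → u 0 y < θ₁ := by
    intro y hy
    by_contra hcon
    push_neg at hcon
    apply hx₀n
    right
    rw [Metric.mem_thickening_iff]
    exact ⟨y, hcon, by rwa [dist_comm]⟩
  have hmaxcoord : ∀ y : Euc d, R ≤ dist y x₀ → ∃ i : Fin d, b ≤ |y i - x₀ i| := by
    intro y hy
    by_contra hcon
    push_neg at hcon
    have h2 : ∀ i : Fin d, dist (y i) (x₀ i) ^ 2 < b ^ 2 := by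
      intro i
      rw [Real.dist_eq]
      apply pow_lt_pow_left₀ (hcon i) (abs_nonneg _) (by norm_num)
    have h3 : ∑ i : Fin d, dist (y i) (x₀ i) ^ 2 < ∑ _i : Fin d, b ^ 2 :=
      Finset.sum_lt_sum_of_nonempty Finset.univ_nonempty (fun i _ => h2 i)
    have h4 : ∑ _i : Fin d, b ^ 2 = (d:ℝ) * b ^ 2 := by
      rw [Finset.sum_const, Finset.card_univ, Fintype.card_fin, nsmul_eq_mul]
    have h5 : (d:ℝ) * b ^ 2 = R ^ 2 := by
      have hb2 : b ^ 2 = R ^ 2 / (d:ℝ) := by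
        rw [hb, div_pow]
        congr 1
        rw [sq]
        exact hsd2
      rw [hb2]
      field_simp
    have h6 : dist y x₀ < R := by
      rw [EuclideanSpace.dist_eq]
      have h7 : ∑ i : Fin d, dist (y i) (x₀ i) ^ 2 < R ^ 2 := by
        rw [← h5, ← h4]; exact h3
      calc Real.sqrt (∑ i : Fin d, dist (y i) (x₀ i) ^ 2)
          < Real.sqrt (R ^ 2) := by
            apply Real.sqrt_lt_sqrt (Finset.sum_nonneg (fun i _ => sq_nonneg _)) h7
        _ = R := Real.sqrt_sq hRpos.le
    linarith
  -- outside the ball the barrier dominates with margin ε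
  have hWout : ∀ s : ℝ, 0 ≤ s → ∀ y : Euc d, R ≤ dist y x₀ → u s y + ε ≤ V s y := by
    intro s hs y hy
    obtain ⟨i, hi⟩ := hmaxcoord y hy
    have hexp1 : 1 ≤ Real.exp (2 * M * s) := Real.one_le_exp (by positivity)
    have hterm1 : 1 ≤ Real.exp (lam * ((y i - x₀ i) - b) + 2 * M * s)
        + Real.exp (lam * (-(y i - x₀ i) - b) + 2 * M * s) := by
      rcases abs_cases (y i - x₀ i) with ⟨hab, _⟩ | ⟨hab, _⟩
      · have h1 : 1 ≤ Real.exp (lam * ((y i - x₀ i) - b) + 2 * M * s) := by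
          apply Real.one_le_exp
          have h2 : 0 ≤ lam * ((y i - x₀ i) - b) :=
            mul_nonneg hlampos.le (by rw [hab] at hi; linarith)
          nlinarith [mul_nonneg hMpos.le hs]
        linarith [Real.exp_pos (lam * (-(y i - x₀ i) - b) + 2 * M * s)]
      · have h1 : 1 ≤ Real.exp (lam * (-(y i - x₀ i) - b) + 2 * M * s) := by
          apply Real.one_le_exp
          have h2 : 0 ≤ lam * (-(y i - x₀ i) - b) :=
            mul_nonneg hlampos.le (by rw [hab] at hi; linarith)
          nlinarith [mul_nonneg hMpos.le hs]
        linarith [Real.exp_pos (lam * ((y i - x₀ i) - b) + 2 * M * s)]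
    have hsumge : Real.exp (lam * ((y i - x₀ i) - b) + 2 * M * s)
        + Real.exp (lam * (-(y i - x₀ i) - b) + 2 * M * s)
        ≤ ∑ j : Fin d, (Real.exp (lam * ((y j - x₀ j) - b) + 2 * M * s)
          + Real.exp (lam * (-(y j - x₀ j) - b) + 2 * M * s)) :=
      Finset.single_le_sum (f := fun j : Fin d =>
        Real.exp (lam * ((y j - x₀ j) - b) + 2 * M * s)
          + Real.exp (lam * (-(y j - x₀ j) - b) + 2 * M * s))
        (fun j _ => by positivity) (Finset.mem_univ i)
    have hu1 : u s y ≤ 1 := (hu.2.1 s y).2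
    have h7 : ε ≤ ε * Real.exp (2 * M * s) := le_mul_of_one_le_right hεpos.le hexp1
    rw [hVdef]
    have hθ1 : 0 < θ₁ := hθ.1
    linarith
  -- initial strict positivity
  have hW0 : ∀ y : Euc d, u 0 y < V 0 y := by
    intro y
    rcases lt_or_ge (dist y x₀) R with hy | hy
    · have h1 := hball y hy
      have h2 := hVgt 0 y
      rw [mul_zero, Real.exp_zero, mul_one] at h2
      linarith
    · linarith [hWout 0 le_rfl y hy, hεpos]
  -- value at (t, x₀)
  have hVtx₀ : V t x₀ = θ₁ + ε * Real.exp (2 * M * t)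
      + (d:ℝ) * (2 * Real.exp (-k - L)) := by
    rw [hVdef]
    congr 1
    have h1 : ∀ i : Fin d,
        Real.exp (lam * ((x₀ i - x₀ i) - b) + 2 * M * t)
          + Real.exp (lam * (-(x₀ i - x₀ i) - b) + 2 * M * t)
        = 2 * Real.exp (-k - L) := by
      intro i
      rw [sub_self]
      have h2 : lam * ((0:ℝ) - b) + 2 * M * t = -k - L := by linear_combination -hkey
      have h3 : lam * (-(0:ℝ) - b) + 2 * M * t = -k - L := by linear_combination -hkey
      rw [h2, h3]
      ring
    rw [Finset.sum_congr rfl (fun i _ => h1 i), Finset.sum_const, Finset.card_univ,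
      Fintype.card_fin, nsmul_eq_mul]
  have hVineq : V t x₀ < 1 - θ₁ := by
    have hεe : ε * Real.exp (2 * M * t) = (1 - 2 * θ₁) * (1 - Real.exp (-k)) / 2 := by
      rw [hε]
      field_simp
    have heL : Real.exp (-k - L) = Real.exp (-k) * ((1 - 2 * θ₁) / (2 * d)) := by
      rw [show -k - L = -k + -L by ring, Real.exp_add]
      congr 1
      rw [Real.exp_neg, hL, Real.exp_log hargpos, inv_div]
    have hd0 : (d:ℝ) ≠ 0 := by linarith
    have h8 : (d:ℝ) * (2 * (Real.exp (-k) * ((1 - 2 * θ₁) / (2 * d))))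
        = (1 - 2 * θ₁) * Real.exp (-k) := by
      field_simp
    rw [hVtx₀, hεe, heL, h8]
    nlinarith [hek, h2θ, Real.exp_pos (-k)]
  -- the compact touching set
  set Q : Set (ℝ × Euc d) := Icc 0 t ×ˢ Metric.closedBall x₀ R with hQ
  have hQcomp : IsCompact Q := isCompact_Icc.prod (isCompact_closedBall x₀ R)
  set W : ℝ × Euc d → ℝ := fun p => V p.1 p.2 - u p.1 p.2 with hW
  have hWcont : ContinuousOn W Q := by
    apply ContinuousOn.sub hVcont.continuousOn
    apply hu.1.mono
    intro p hp
    exact ⟨hp.1.1, trivial⟩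
  set A := Q ∩ W ⁻¹' (Iic 0) with hA
  have hQclosed : IsClosed Q := isClosed_Icc.prod Metric.isClosed_closedBall
  have hAclosed : IsClosed A :=
    hWcont.preimage_isClosed_of_isClosed hQclosed isClosed_Iic
  have hAcomp : IsCompact A := hQcomp.of_isClosed_subset hAclosed inter_subset_left
  have hAne : A.Nonempty := by
    refine ⟨(t, x₀), ⟨⟨le_refl 0 |> fun _ => ⟨ht, le_rfl⟩, Metric.mem_closedBall_self hRpos.le⟩, ?_⟩⟩
    simp only [Set.mem_preimage, Set.mem_Iic, hW]
    linarith
  set pr := Prod.fst '' A with hpr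
  have hprcomp : IsCompact pr := hAcomp.image continuous_fst
  set τ₀ := sInf pr with hτ₀
  have hτ₀mem : τ₀ ∈ pr := hprcomp.sInf_mem (hAne.image _)
  obtain ⟨p₀, hp₀A, hp₀fst⟩ := hτ₀mem
  obtain ⟨τ', y₀⟩ := p₀
  simp only at hp₀fst
  subst hp₀fst
  have hτ₀Icc : τ₀ ∈ Icc 0 t := hp₀A.1.1
  have hWy₀ : V τ₀ y₀ - u τ₀ y₀ ≤ 0 := hp₀A.2
  have hτ₀lb : ∀ p ∈ A, τ₀ ≤ p.1 := fun p hp => csInf_le hprcomp.bddBelow ⟨p, hp, rfl⟩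
  have hτ₀pos : 0 < τ₀ := by
    rcases eq_or_lt_of_le hτ₀Icc.1 with h | h
    · exfalso
      have h1 := hW0 y₀
      rw [← h] at hWy₀
      linarith
    · exact h
  -- before τ₀ the barrier strictly dominates
  have hpre : ∀ s, 0 ≤ s → s < τ₀ → ∀ y, 0 < V s y - u s y := by
    intro s hs0 hsτ y
    have hst : s ≤ t := le_trans hsτ.le hτ₀Icc.2
    rcases lt_or_ge (dist y x₀) R with hy | hy
    · by_contra hcon
      push_neg at hcon
      have hmem : (s, y) ∈ A := ⟨⟨⟨hs0, hst⟩, Metric.mem_closedBall.mpr hy.le⟩, hcon⟩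
      have := hτ₀lb (s, y) hmem
      simp only at this
      linarith
    · linarith [hWout s hs0 y hy, hεpos]
  -- at time τ₀ the barrier still dominates (limit from the left)
  have hWτ₀ : ∀ y : Euc d, 0 ≤ V τ₀ y - u τ₀ y := by
    intro y
    have hne : (𝓝[Ico 0 τ₀] τ₀).NeBot := by
      apply mem_closure_iff_nhdsWithin_neBot.mp
      rw [closure_Ico (ne_of_lt hτ₀pos)]
      exact ⟨hτ₀pos.le, le_rfl⟩
    have hmk : Continuous fun s : ℝ => (s, y) := continuous_id.prodMk continuous_const
    have hcu : Tendsto (fun s => u s y) (𝓝[Ico 0 τ₀] τ₀) (𝓝 (u τ₀ y)) := by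
      have h1 : ContinuousWithinAt (fun p : ℝ × Euc d => u p.1 p.2)
          (Ici (0:ℝ) ×ˢ (univ : Set (Euc d))) (τ₀, y) := hu.1 (τ₀, y) ⟨hτ₀pos.le, trivial⟩
      have h2 : MapsTo (fun s : ℝ => (s, y)) (Ico 0 τ₀)
          (Ici (0:ℝ) ×ˢ (univ : Set (Euc d))) := fun s hs => ⟨hs.1, trivial⟩
      have h3 := ContinuousWithinAt.comp (g := fun p : ℝ × Euc d => u p.1 p.2)
        (f := fun s : ℝ => (s, y)) h1 hmk.continuousWithinAt h2
      exact h3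
    have hcV : Tendsto (fun s => V s y) (𝓝[Ico 0 τ₀] τ₀) (𝓝 (V τ₀ y)) :=
      ((hVcont.comp hmk).tendsto τ₀).mono_left nhdsWithin_le_nhds
    apply ge_of_tendsto (hcV.sub hcu)
    filter_upwards [self_mem_nhdsWithin] with s hs
    exact (hpre s hs.1 hs.2 y).le
  have htouch : u τ₀ y₀ = V τ₀ y₀ := le_antisymm (by linarith [hWτ₀ y₀]) (by linarith)
  have hglobmax : ∀ y, u τ₀ y - V τ₀ y ≤ u τ₀ y₀ - V τ₀ y₀ := by
    intro y
    have := hWτ₀ y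
    rw [htouch]
    linarith
  -- Laplacian bound at the touching point
  set Pc := ∑ i : Fin d, (Real.exp (lam * ((y₀ i - x₀ i) - b) + 2 * M * τ₀)
      + Real.exp (lam * (-(y₀ i - x₀ i) - b) + 2 * M * τ₀)) with hPc
  have hlapb : lap (u τ₀) y₀ ≤ M * Pc := by
    unfold lap
    rw [hPc, Finset.mul_sum]
    apply Finset.sum_le_sum
    intro i _
    set Ai := Real.exp (lam * ((y₀ i - x₀ i) - b) + 2 * M * τ₀) with hAi
    set Bi := Real.exp (lam * (-(y₀ i - x₀ i) - b) + 2 * M * τ₀) with hBi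
    have hAipos : 0 < Ai := Real.exp_pos _
    have hBipos : 0 < Bi := Real.exp_pos _
    have hconth : Continuous fun r : ℝ => u τ₀ (y₀ + r • EuclideanSpace.single i (1:ℝ)) := by
      apply (hut τ₀ hτ₀pos.le).comp
      exact continuous_const.add (continuous_id.smul continuous_const)
    have hmaxr : ∀ r : ℝ, u τ₀ (y₀ + r • EuclideanSpace.single i (1:ℝ))
        - ((V τ₀ y₀ - (Ai + Bi)) + Ai * Real.exp (lam * r) + Bi * Real.exp (-(lam * r)))
        ≤ u τ₀ (y₀ + (0:ℝ) • EuclideanSpace.single i (1:ℝ)) - ((V τ₀ y₀ - (Ai + Bi)) + Ai + Bi) := by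
      intro r
      have h1 := hglobmax (y₀ + r • EuclideanSpace.single i (1:ℝ))
      have h2 := barrier_slice θ₁ ε M lam b x₀ τ₀ y₀ i r
      have h3 : (y₀ + (0:ℝ) • EuclideanSpace.single i (1:ℝ)) = y₀ := by simp
      rw [h3]
      have h4 : V τ₀ (y₀ + r • EuclideanSpace.single i (1:ℝ))
          = (V τ₀ y₀ - (Ai + Bi)) + Ai * Real.exp (lam * r) + Bi * Real.exp (-(lam * r)) := h2
      rw [← h4]
      linarith
    have hkey2 := secondDeriv_le_of_max _ hconth (V τ₀ y₀ - (Ai + Bi)) Ai Bi lam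
      hAipos hBipos hlampos hmaxr
    calc secondDeriv (u τ₀) y₀ (EuclideanSpace.single i 1) ≤ lam ^ 2 * (Ai + Bi) := hkey2
    _ = M * (Ai + Bi) := by rw [hlamsq]
  -- reaction bound at the touching point
  have hVθ : θ₁ ≤ V τ₀ y₀ := by
    have := hVgt τ₀ y₀
    nlinarith [Real.exp_pos (2 * M * τ₀), hεpos]
  have hfb : g y₀ (u τ₀ y₀) ≤ M * (V τ₀ y₀ - θ₁) := by
    rw [htouch]
    have h1 := (hglip y₀).dist_le_mul (V τ₀ y₀) θ₁
    rw [Real.dist_eq, Real.coe_toNNReal _ (by linarith), Real.dist_eq] at h1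
    have h2 : |g y₀ (V τ₀ y₀) - g y₀ θ₁| ≤ M * |V τ₀ y₀ - θ₁| := h1
    rw [hgθ y₀, sub_zero] at h2
    rw [abs_of_nonneg (by linarith : (0:ℝ) ≤ V τ₀ y₀ - θ₁)] at h2
    calc g y₀ (V τ₀ y₀) ≤ |g y₀ (V τ₀ y₀)| := le_abs_self _
    _ ≤ M * (V τ₀ y₀ - θ₁) := h2
  -- time derivative comparison
  have hVd := barrier_hasDerivAt θ₁ ε M lam b x₀ y₀ τ₀
  have hud := hu.2.2 τ₀ hτ₀pos y₀
  have hφd : HasDerivAt (fun s => V s y₀ - u s y₀)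
      ((2 * M * (ε * Real.exp (2 * M * τ₀)) +
        ∑ i : Fin d, (2 * M * Real.exp (lam * ((y₀ i - x₀ i) - b) + 2 * M * τ₀)
          + 2 * M * Real.exp (lam * (-(y₀ i - x₀ i) - b) + 2 * M * τ₀)))
        - (lap (u τ₀) y₀ + g y₀ (u τ₀ y₀))) τ₀ := hVd.sub hud
  have hslope_le : (2 * M * (ε * Real.exp (2 * M * τ₀)) +
        ∑ i : Fin d, (2 * M * Real.exp (lam * ((y₀ i - x₀ i) - b) + 2 * M * τ₀)
          + 2 * M * Real.exp (lam * (-(y₀ i - x₀ i) - b) + 2 * M * τ₀)))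
        - (lap (u τ₀) y₀ + g y₀ (u τ₀ y₀)) ≤ 0 := by
    have h1 : Tendsto (slope (fun s => V s y₀ - u s y₀) τ₀) (𝓝[<] τ₀) (𝓝 _) :=
      (hasDerivAt_iff_tendsto_slope.mp hφd).mono_left
        (nhdsWithin_mono τ₀ (fun s hs => ne_of_lt hs))
    apply le_of_tendsto h1
    filter_upwards [Ioo_mem_nhdsLT_of_mem (⟨hτ₀pos, le_refl τ₀⟩ : τ₀ ∈ Ioc 0 τ₀)] with s hs
    rw [slope_def_field]
    have h2 : V τ₀ y₀ - u τ₀ y₀ = 0 := by rw [htouch]; ring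
    have h3 : 0 ≤ V s y₀ - u s y₀ := (hpre s hs.1.le hs.2 y₀).le
    have h4 : s - τ₀ < 0 := by linarith [hs.2]
    rw [h2]
    exact div_nonpos_iff.mpr (Or.inl ⟨by linarith, by linarith⟩)
  -- assemble the contradiction
  have hsum2M : ∑ i : Fin d, (2 * M * Real.exp (lam * ((y₀ i - x₀ i) - b) + 2 * M * τ₀)
      + 2 * M * Real.exp (lam * (-(y₀ i - x₀ i) - b) + 2 * M * τ₀)) = 2 * M * Pc := by
    rw [hPc, Finset.mul_sum]
    apply Finset.sum_congr rfl
    intro i _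
    ring
  rw [hsum2M] at hslope_le
  have hVval : V τ₀ y₀ - θ₁ = ε * Real.exp (2 * M * τ₀) + Pc := by
    rw [hVdef, ← hPc]
    ring
  rw [hVval, mul_add] at hfb
  have hfinal : 0 < M * (ε * Real.exp (2 * M * τ₀)) := by positivity
  have hM2 : 2 * M * (ε * Real.exp (2 * M * τ₀)) = 2 * (M * (ε * Real.exp (2 * M * τ₀))) := by
    ring
  have hM3 : 2 * M * Pc = 2 * (M * Pc) := by ring
  rw [hM2, hM3] at hslope_le
  linarith [hlapb, hfb, hslope_le]


/-- Corollary 2.1: with `c₁ := 2√(Md)` and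
`κ₁ := 1 + √(d/M) ln(2d/(1-2θ₁))`, one has `c₁ > c₀`, and every solution of
`u_t = Δu + f(x,u,ω)` with `f` satisfying (H1') satisfies
`{u(t,·) ≥ 1-θ₁} ⊆ B_{c₁t+κ₁}({u(0,·) ≥ θ₁})` for all `t ≥ 0`. -/
theorem stmt7 (d : ℕ) (M θ₁ m₁ α₁ : ℝ) (hd : 1 ≤ d)
    (hM : 1 ≤ M) (hθ₁ : θ₁ ∈ Ioo (0:ℝ) (1/2)) (hm₁ : 1 < m₁) (hα₁ : 0 < α₁) :
    c0 M θ₁ m₁ α₁ < c1 d M ∧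
    ∀ (Ω : Type) (f : Euc d → ℝ → Ω → ℝ),
      (∀ ω, H1fixed (fun x u => f x u ω) M θ₁ m₁ α₁) →
      ∀ (ω : Ω) (u : ℝ → Euc d → ℝ), SolvesRD (fun x v => f x v ω) u →
      ∀ t : ℝ, 0 ≤ t →
        {x : Euc d | 1 - θ₁ ≤ u t x} ⊆
          nbhd (c1 d M * t + (1 + Real.sqrt ((d : ℝ) / M) * Real.log (2 * d / (1 - 2 * θ₁))))
            {x : Euc d | θ₁ ≤ u 0 x} := by
  constructor
  · exact c0_lt_c1 hd hM hθ₁ hm₁ hα₁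
  · intro Ω f hf ω u hu t ht
    exact part2 hd hM hθ₁ (fun x v => f x v ω)
      (fun x => (hf ω).zero_low x θ₁ ⟨hθ₁.1.le, le_rfl⟩)
      (fun x => (hf ω).lipschitz_u x) u hu t ht

end Combustion

end
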